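/- arXiv:1608.00747 — 8 statements merged into one kernel-verified Lean document; each statement's English description precedes it below -/
import Mathlib

section
/- For every integer r ≥ 1, the alternating sum ∑_{i=0}^{r} (-1)^i · C(r, i) / (r·i + 1) equals ∏_{i=1}^{r} (1 − 1/(r·i + 1)). -/
/-!
Both sides equal `r! r^r / ∏_{i=0}^{r} (r i + 1)`. For the sum this is the partial-fraction
identity `∑ (-1)^i C(n,i) / (a i + b) = n! aⁿ / ∏_{i=0}^{n} (a i + b)`, proved by induction on `n`:
Pascal's rule writes the sum at rank `n + 1` as the difference of the sums at rank `n` with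
offsets `b` and `b + a`, and the two products in their closed forms share all but one factor.
-/

open Finset Nat

theorem sum_neg_one_pow_mul_choose_div_mul_add {K : Type*} [Field K] (n : ℕ) (a b : K)
    (h : ∀ i ≤ n, a * i + b ≠ 0) :
    ∑ i ∈ range (n + 1), (-1) ^ i * n.choose i / (a * i + b) =
      n ! * a ^ n / ∏ i ∈ range (n + 1), (a * i + b) := by
  induction n generalizing b with
  | zero => simp
  | succ n ih =>
    have hshift : ∀ i ≤ n, a * i + (b + a) ≠ 0 := fun i hi => by
      simpa [mul_add, add_comm, add_left_comm, add_assoc] using h (i + 1) (by omega)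
    have hpascal : ∑ i ∈ range (n + 2), (-1) ^ i * (n + 1).choose i / (a * i + b) =
        ∑ i ∈ range (n + 1), (-1) ^ i * n.choose i / (a * i + b) -
          ∑ i ∈ range (n + 1), (-1) ^ i * n.choose i / (a * i + (b + a)) := by
      simp only [mul_comm _ (Nat.choose _ _ : K), mul_div_assoc,
        sum_choose_succ_mul (fun i _ => (-1) ^ i / (a * i + b) : ℕ → ℕ → K), sub_eq_add_neg,
        ← sum_neg_distrib]
      congr 1
      refine sum_congr rfl fun i _ => ?_
      push_cast
      ring
    set P := ∏ i ∈ range (n + 1), (a * i + b)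
    set Q := ∏ i ∈ range (n + 1), (a * i + (b + a))
    have hprod_first : ∏ i ∈ range (n + 2), (a * i + b) = b * Q := by
      rw [prod_range_succ', mul_comm]
      push_cast
      simp only [mul_add, mul_one, mul_zero, zero_add, add_right_comm _ a b, add_assoc, Q]
    have hprod_last : ∏ i ∈ range (n + 2), (a * i + b) = P * (a * (n + 1) + b) := by
      rw [prod_range_succ]
      push_cast
      rfl
    have hP : P ≠ 0 := prod_ne_zero_iff.2 fun i hi => h i (mem_range.1 hi).le
    have hQ : Q ≠ 0 := prod_ne_zero_iff.2 fun i hi => hshift i (mem_range_succ_iff.1 hi)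
    have hR : ∏ i ∈ range (n + 2), (a * i + b) ≠ 0 :=
      prod_ne_zero_iff.2 fun i hi => h i (mem_range_succ_iff.1 hi)
    rw [hpascal, ih b (fun i hi => h i (by omega)), ih (b + a) hshift, div_sub_div _ _ hP hQ,
      div_eq_div_iff (mul_ne_zero hP hQ) hR, factorial_succ]
    push_cast
    linear_combination (n ! * a ^ n * Q) * hprod_last - (n ! * a ^ n * P) * hprod_first

theorem prod_Icc_one_sub_one_div_mul_add_one {K : Type*} [Field K] (n : ℕ) (a : K)
    (h : ∀ i ∈ Icc 1 n, a * i + 1 ≠ 0) :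
    ∏ i ∈ Icc 1 n, (1 - 1 / (a * i + 1)) = n ! * a ^ n / ∏ i ∈ range (n + 1), (a * i + 1) := by
  have hterm : ∀ i ∈ Icc 1 n, 1 - 1 / (a * i + 1) = a * i / (a * i + 1) := fun i hi => by
    field_simp [h i hi]
    ring
  have hfact : ∏ i ∈ Icc 1 n, (i : K) = n ! := by
    rw [← Nat.cast_prod, ← Ico_add_one_right_eq_Icc, prod_Ico_id_eq_factorial]
  rw [prod_congr rfl hterm, prod_div_distrib, prod_mul_distrib, prod_const, Nat.card_Icc,
    add_tsub_cancel_right, hfact, prod_range_eq_mul_Ico _ (by omega), Ico_add_one_right_eq_Icc]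
  simp [mul_comm]

theorem stmt0_general (r : ℕ) :
    ∑ i ∈ Finset.range (r + 1), (-1 : ℝ) ^ i * (r.choose i) / ((r : ℝ) * i + 1) =
      ∏ i ∈ Finset.Icc 1 r, (1 - 1 / ((r : ℝ) * i + 1)) := by
  rw [sum_neg_one_pow_mul_choose_div_mul_add r (r : ℝ) 1 fun i _ => by positivity,
    prod_Icc_one_sub_one_div_mul_add_one r (r : ℝ) fun i _ => by positivity]

theorem stmt0 (r : ℕ) (hr : 1 ≤ r) :
    ∑ i ∈ Finset.range (r + 1), (-1 : ℝ) ^ i * (r.choose i) / ((r : ℝ) * i + 1) =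
      ∏ i ∈ Finset.Icc 1 r, (1 - 1 / ((r : ℝ) * i + 1)) :=
  stmt0_general r
end

section
/- For every integer r ≥ 1, the quantity ∏_{i=1}^{r}(1 − 1/(r·i+1)) satisfies |∏_{i=1}^{r}(1 − 1/(r·i+1)) − (1 − H_r/r)| ≤ (π²/6 + e)·(H_r/r)², where H_r = ∑_{i=1}^{r} 1/i is the r-th harmonic number. -/
/-!
Write `xᵢ = 1/(r i + 1)`, `yᵢ = 1/(r i)`, so that `∑ yᵢ = H_r / r`. The product
`∏ (1 - xᵢ)` lies between the Bonferroni bounds `1 - ∑ xᵢ` and `1 - ∑ xᵢ + (∑ xᵢ)² / 2`,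
and `0 ≤ yᵢ - xᵢ ≤ yᵢ²`, so replacing `∑ xᵢ` by `∑ yᵢ` costs at most `∑ yᵢ² ≤ (∑ yᵢ)²`.
Altogether the error is at most `(3/2) (H_r / r)²`, and `3/2 ≤ π²/6 + e`.
-/

open Finset

namespace Finset

variable {ι : Type*} {s : Finset ι} {x : ι → ℝ}

theorem one_sub_sum_le_prod_one_sub (hx₀ : ∀ i ∈ s, 0 ≤ x i)
    (hx₁ : ∀ i ∈ s, x i ≤ 1) :
    1 - ∑ i ∈ s, x i ≤ ∏ i ∈ s, (1 - x i) := by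
  classical
  induction s using Finset.induction_on with
  | empty => simp
  | insert a s ha ih =>
    rw [sum_insert ha, prod_insert ha]
    have hS : 0 ≤ ∑ i ∈ s, x i := sum_nonneg fun i hi ↦ hx₀ i (mem_insert_of_mem hi)
    have hP := ih (fun i hi ↦ hx₀ i (mem_insert_of_mem hi))
      fun i hi ↦ hx₁ i (mem_insert_of_mem hi)
    have hxa₀ := hx₀ a (mem_insert_self a s)
    have hxa₁ := hx₁ a (mem_insert_self a s)
    nlinarith [mul_le_mul_of_nonneg_left hP (sub_nonneg.2 hxa₁)]

theorem prod_one_sub_le_one_sub_sum_add_sq_div_two (hx₀ : ∀ i ∈ s, 0 ≤ x i)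
    (hx₁ : ∀ i ∈ s, x i ≤ 1) :
    ∏ i ∈ s, (1 - x i) ≤ 1 - ∑ i ∈ s, x i + (∑ i ∈ s, x i) ^ 2 / 2 := by
  classical
  induction s using Finset.induction_on with
  | empty => simp
  | insert a s ha ih =>
    rw [sum_insert ha, prod_insert ha]
    have hS : 0 ≤ ∑ i ∈ s, x i := sum_nonneg fun i hi ↦ hx₀ i (mem_insert_of_mem hi)
    have hP := ih (fun i hi ↦ hx₀ i (mem_insert_of_mem hi))
      fun i hi ↦ hx₁ i (mem_insert_of_mem hi)
    have hxa₀ := hx₀ a (mem_insert_self a s)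
    have hxa₁ := hx₁ a (mem_insert_self a s)
    nlinarith [mul_le_mul_of_nonneg_left hP (sub_nonneg.2 hxa₁),
      mul_nonneg hxa₀ (sq_nonneg (∑ i ∈ s, x i))]

theorem abs_prod_one_sub_sub_one_sub_sum_le {y : ι → ℝ} (hx₀ : ∀ i ∈ s, 0 ≤ x i)
    (hx₁ : ∀ i ∈ s, x i ≤ 1) (hxy : ∀ i ∈ s, x i ≤ y i)
    (hyx : ∀ i ∈ s, y i - x i ≤ y i ^ 2) :
    |∏ i ∈ s, (1 - x i) - (1 - ∑ i ∈ s, y i)| ≤ 3 / 2 * (∑ i ∈ s, y i) ^ 2 := by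
  have hSx₀ : 0 ≤ ∑ i ∈ s, x i := sum_nonneg hx₀
  have hSxy : ∑ i ∈ s, x i ≤ ∑ i ∈ s, y i := sum_le_sum hxy
  have hSyx : ∑ i ∈ s, y i - ∑ i ∈ s, x i ≤ (∑ i ∈ s, y i) ^ 2 :=
    calc ∑ i ∈ s, y i - ∑ i ∈ s, x i = ∑ i ∈ s, (y i - x i) := (sum_sub_distrib ..).symm
      _ ≤ ∑ i ∈ s, y i ^ 2 := sum_le_sum hyx
      _ ≤ (∑ i ∈ s, y i) ^ 2 :=
        sum_sq_le_sq_sum_of_nonneg fun i hi ↦ (hx₀ i hi).trans (hxy i hi)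
  have hlower := one_sub_sum_le_prod_one_sub hx₀ hx₁
  have hupper := prod_one_sub_le_one_sub_sum_add_sq_div_two hx₀ hx₁
  rw [abs_sub_le_iff]
  constructor <;> nlinarith [pow_le_pow_left₀ hSx₀ hSxy 2]

end Finset

theorem one_div_sub_one_div_add_one_le_sq {a : ℝ} (ha : 0 < a) :
    1 / a - 1 / (a + 1) ≤ (1 / a) ^ 2 := by
  rw [div_sub_div _ _ ha.ne' (by positivity), div_pow, one_pow,
    div_le_div_iff₀ (by positivity) (by positivity)]
  nlinarith

theorem stmt3_general (r : ℕ) (H : ℝ) (hH : H = ∑ i ∈ Finset.Icc 1 r, (1 : ℝ) / i) :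
    |(∏ i ∈ Finset.Icc 1 r, (1 - 1 / ((r : ℝ) * i + 1))) - (1 - H / r)| ≤
      (Real.pi ^ 2 / 6 + Real.exp 1) * (H / r) ^ 2 := by
  have hpos : ∀ i ∈ Icc 1 r, (0 : ℝ) < r * i := fun i hi ↦ by
    obtain ⟨hi₁, hir⟩ := mem_Icc.1 hi
    have : 0 < r := by omega
    positivity
  have hHr : H / r = ∑ i ∈ Icc 1 r, 1 / ((r : ℝ) * i) := by
    simp only [hH, sum_div, div_div, mul_comm]
  have hC : (3 / 2 : ℝ) ≤ Real.pi ^ 2 / 6 + Real.exp 1 := by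
    have := Real.add_one_le_exp 1
    nlinarith [sq_nonneg Real.pi]
  rw [hHr]
  refine (abs_prod_one_sub_sub_one_sub_sum_le (fun i hi ↦ ?_) (fun i hi ↦ ?_) (fun i hi ↦ ?_)
    fun i hi ↦ one_div_sub_one_div_add_one_le_sq (hpos i hi)).trans (by gcongr)
  · have := hpos i hi; positivity
  · rw [div_le_one (by linarith [hpos i hi])]; linarith [hpos i hi]
  · exact one_div_le_one_div_of_le (hpos i hi) (by linarith)

theorem stmt3 (r : ℕ) (hr : 1 ≤ r) (H : ℝ) (hH : H = ∑ i ∈ Finset.Icc 1 r, (1 : ℝ) / i) :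
    |(∏ i ∈ Finset.Icc 1 r, (1 - 1 / ((r : ℝ) * i + 1))) - (1 - H / r)| ≤
      (Real.pi ^ 2 / 6 + Real.exp 1) * (H / r) ^ 2 :=
  stmt3_general r H hH
end

section
/- Let G be a graph whose vertex set is ordered by a linear order u_1, …, u_n, and let Z be the set of vertices u_i such that u_i is NOT the unique neighbor within {u_i, …, u_n} of some vertex u_j with j < i. Then Z is a zero forcing set of G. -/
namespace SimpleGraph

variable {V : Type*}

/-- `G.ZeroForces Z v` : vertex `v` is eventually colored when starting from `Z`
and iteratively adding any vertex that is the unique uncolored neighbor of a colored vertex. -/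
inductive ZeroForces (G : SimpleGraph V) (Z : Set V) : V → Prop
  | base {v : V} : v ∈ Z → ZeroForces G Z v
  | force {v u : V} : ZeroForces G Z v → G.Adj v u →
      (∀ w, G.Adj v w → w ≠ u → ZeroForces G Z w) → ZeroForces G Z u

/-- The forcing closure `F(Z)`. -/
def zfClosure (G : SimpleGraph V) (Z : Set V) : Set V := {v | G.ZeroForces Z v}

/-- `Z` is a zero forcing set of `G`. -/
def IsZeroForcingSet (G : SimpleGraph V) (Z : Set V) : Prop := ∀ v, G.ZeroForces Z v

/-- The zero forcing number `Z(G)`. -/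
noncomputable def zeroForcingNumber (G : SimpleGraph V) [Fintype V] : ℕ :=
  sInf {k | ∃ Z : Finset V, Z.card = k ∧ G.IsZeroForcingSet ↑Z}

end SimpleGraph

namespace SimpleGraph

variable {V : Type*} [LinearOrder V] [WellFoundedLT V]

theorem isZeroForcingSet_of_wellFoundedLT (G : SimpleGraph V) :
    G.IsZeroForcingSet
      {v : V | ¬ ∃ w, w < v ∧ G.Adj w v ∧ ∀ x, v ≤ x → G.Adj w x → x = v} := by
  intro v
  induction v using WellFoundedLT.induction with
  | _ v ih =>
    by_cases hv : ∃ w, w < v ∧ G.Adj w v ∧ ∀ x, v ≤ x → G.Adj w x → x = v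
    · obtain ⟨w, hwv, hwv_adj, hv_unique⟩ := hv
      -- every other neighbour of `w` lies below `v`, hence is already forced
      have h_others : ∀ x, G.Adj w x → x ≠ v → G.ZeroForces _ x := fun x hwx hxv =>
        ih x (lt_of_not_ge fun hvx => hxv (hv_unique x hvx hwx))
      exact .force (ih w hwv) hwv_adj h_others
    · exact .base hv

end SimpleGraph

theorem stmt6 {V : Type*} [Fintype V] [LinearOrder V] (G : SimpleGraph V) :
    G.IsZeroForcingSet
      {v : V | ¬ ∃ w, w < v ∧ G.Adj w v ∧ ∀ x, v ≤ x → G.Adj w x → x = v} :=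
  G.isZeroForcingSet_of_wellFoundedLT
end

section
/- Let G be a finite simple graph, let u be a vertex, and choose a linear order of V(G) uniformly at random. The probability that for no neighbor v of u is u the rightmost vertex of the closed neighborhood N[v] in the order, equals ∑_{i=0}^{d(u)} (−1)^i · ∑_{I ⊆ N(u), |I| = i} |{u} ∪ ⋃_{v∈I} N[v]|^{−1}. -/
/-!
Inclusion–exclusion over the neighbours `v` of `u` reduces the statement to the events
"`u` is last in `N[v]` for every `v ∈ I`", i.e. "`u` is last in `{u} ∪ ⋃_{v ∈ I} N[v]`".
For any finite `S ∋ u`, composing with the transposition `(u w)` matches the orders in which `u`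
is last in `S` with those in which `w` is, so each of the `|S|` disjoint classes has
probability `1/|S|`.
-/

open Finset

section LastIn

variable {α β : Type*} [Fintype α] [DecidableEq α] [Fintype β] [LinearOrder β]

/-- Bijections `σ : α ≃ β` stand for the linear orders of `α`; these are the ones in which `w`
is the last element of `S`. -/
def lastIn (S : Finset α) (w : α) : Finset (α ≃ β) := {σ | ∀ x ∈ S, σ x ≤ σ w}

lemma swap_trans_mem_lastIn {S : Finset α} {u w : α} (hu : u ∈ S) (hw : w ∈ S)
    {σ : α ≃ β} (hσ : σ ∈ lastIn S u) : (Equiv.swap u w).trans σ ∈ lastIn S w := by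
  simp only [lastIn, mem_filter, mem_univ, true_and] at hσ ⊢
  intro x hx
  simpa using hσ _ ((Equiv.swap_bijOn_self (s := (S : Set α)) (iff_of_true hu hw)).mapsTo hx)

lemma card_lastIn_eq_card_lastIn {S : Finset α} {u w : α} (hu : u ∈ S) (hw : w ∈ S) :
    #(lastIn (β := β) S u) = #(lastIn (β := β) S w) :=
  card_nbij' (fun σ => (Equiv.swap u w).trans σ) (fun σ => (Equiv.swap u w).trans σ)
    (fun _ hσ => swap_trans_mem_lastIn hu hw hσ)
    (fun _ hσ => Equiv.swap_comm u w ▸ swap_trans_mem_lastIn hw hu hσ)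
    (fun σ _ => by ext; simp) (fun σ _ => by ext; simp)

lemma pairwiseDisjoint_lastIn (S : Finset α) :
    (S : Set α).PairwiseDisjoint (lastIn (β := β) S) := by
  intro w₁ h₁ w₂ h₂ hne
  refine disjoint_left.mpr fun σ hσ₁ hσ₂ => hne (σ.injective ?_)
  simp only [lastIn, mem_filter, mem_univ, true_and] at hσ₁ hσ₂
  exact le_antisymm (hσ₂ w₁ h₁) (hσ₁ w₂ h₂)

lemma biUnion_lastIn {S : Finset α} (hS : S.Nonempty) :
    S.biUnion (lastIn (β := β) S) = univ := by
  refine eq_univ_of_forall fun σ => ?_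
  obtain ⟨w, hw, hmax⟩ := S.exists_max_image σ hS
  exact mem_biUnion.mpr ⟨w, hw, by simpa [lastIn] using hmax⟩

lemma card_mul_card_lastIn {S : Finset α} {u : α} (hu : u ∈ S) :
    #S * #(lastIn (β := β) S u) = Fintype.card (α ≃ β) := by
  rw [← card_univ, ← biUnion_lastIn ⟨u, hu⟩, card_biUnion (pairwiseDisjoint_lastIn S),
    ← smul_eq_mul, ← sum_const]
  exact sum_congr rfl fun w hw => card_lastIn_eq_card_lastIn hu hw

lemma inf_lastIn (I : Finset α) (T : α → Finset α) (u : α) :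
    I.inf (fun v => lastIn (β := β) (T v) u) = lastIn (insert u (I.biUnion T)) u := by
  ext σ
  simp only [lastIn, mem_inf, mem_filter, mem_univ, true_and, forall_mem_insert, le_refl,
    mem_biUnion]
  grind

lemma card_lastIn_div_card [Nonempty (α ≃ β)] {S : Finset α} {u : α} (hu : u ∈ S) :
    (#(lastIn (β := β) S u) : ℝ) / Fintype.card (α ≃ β) = (#S : ℝ)⁻¹ := by
  have hS : (#S : ℝ) ≠ 0 := by exact_mod_cast (card_pos.mpr ⟨u, hu⟩).ne'
  have hL : (#(lastIn (β := β) S u) : ℝ) ≠ 0 := by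
    have hpos : 0 < Fintype.card (α ≃ β) := Fintype.card_pos
    rw [← card_mul_card_lastIn hu] at hpos
    exact_mod_cast (Nat.pos_of_mul_pos_left hpos).ne'
  rw [← card_mul_card_lastIn hu, Nat.cast_mul]
  field_simp

end LastIn

theorem stmt7 {V : Type*} [Fintype V] [DecidableEq V] (G : SimpleGraph V)
    [DecidableRel G.Adj] (u : V) :
    (Nat.card {σ : V ≃ Fin (Fintype.card V) //
        ∀ v ∈ G.neighborFinset u,
          ¬ ∀ x ∈ insert v (G.neighborFinset v), σ x ≤ σ u} : ℝ) /
      (Nat.card (V ≃ Fin (Fintype.card V)) : ℝ) =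
    ∑ i ∈ Finset.range (G.degree u + 1), (-1 : ℝ) ^ i *
      ∑ I ∈ (G.neighborFinset u).powersetCard i,
        ((insert u (I.biUnion fun v => insert v (G.neighborFinset v))).card : ℝ)⁻¹ := by
  have : Nonempty (V ≃ Fin (Fintype.card V)) := ⟨Fintype.equivFin V⟩
  set A : V → Finset (V ≃ Fin (Fintype.card V)) :=
    fun v => lastIn (insert v (G.neighborFinset v)) u
  have hcount : Nat.card {σ : V ≃ Fin (Fintype.card V) //
        ∀ v ∈ G.neighborFinset u, ¬ ∀ x ∈ insert v (G.neighborFinset v), σ x ≤ σ u} =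
      #((G.neighborFinset u).inf fun v => (A v)ᶜ) := by
    rw [Nat.card_eq_fintype_card, Fintype.card_subtype]
    congr 1
    ext σ
    simp [A, lastIn, mem_inf]
  have hIE := congrArg (Int.cast : ℤ → ℝ)
    (inclusion_exclusion_card_inf_compl (G.neighborFinset u) A)
  push_cast at hIE
  rw [hcount, hIE, Nat.card_eq_fintype_card, sum_div, ← G.card_neighborFinset_eq_degree,
    sum_powerset]
  refine sum_congr rfl fun i _ => ?_
  rw [mul_sum]
  refine sum_congr rfl fun I hI => ?_
  rw [(mem_powersetCard.mp hI).2, mul_div_assoc, inf_lastIn,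
    card_lastIn_div_card (mem_insert_self _ _)]
end

section
/- If G is a finite simple graph, then the zero forcing number Z(G) satisfies Z(G) ≤ ∑_{u ∈ V(G)} ∑_{i=0}^{d(u)} (−1)^i · ∑_{I ⊆ N(u), |I| = i} |{u} ∪ ⋃_{v∈I} N[v]|^{−1}. -/
/-!
Fix an ordering `σ` of the vertices and let `Z_σ` consist of the vertices `u` that are, for no
neighbour `v`, the `σ`-first vertex of `N[v]`. Every other vertex `u` is forced by such a `v` once
the later vertices are, so `Z_σ` is a zero forcing set. Averaging `|Z_σ|` over all orderings,
inclusion–exclusion over the set `I ⊆ N(u)` of neighbours whose closed neighbourhood starts with `u`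
writes `P(u ∈ Z_σ)` as the alternating sum of the probabilities that `u` comes first in
`{u} ∪ ⋃_{v ∈ I} N[v]`, and each of these is the reciprocal of the size of that set.
-/

open Finset

lemma Finset.sum_powerset_neg_one_pow_card_mul_boole {α R : Type*} [CommRing R] (s : Finset α)
    (p : α → Prop) [DecidablePred p] :
    ∑ t ∈ s.powerset, (-1 : R) ^ #t * (if ∀ i ∈ t, p i then 1 else 0) =
      if ∀ i ∈ s, ¬ p i then 1 else 0 := by
  have h (i : α) : (if ¬ p i then (1 : R) else 0) = 1 + -(if p i then 1 else 0) := by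
    split_ifs <;> simp
  simp_rw [← prod_boole, h, prod_one_add, prod_neg]

section Orderings

variable {α β : Type*} [Fintype α] [DecidableEq α] [Fintype β] [LinearOrder β]

lemma card_filter_forall_le_eq_of_mem {S : Finset α} {a b : α} (ha : a ∈ S) (hb : b ∈ S) :
    #{σ : α ≃ β | ∀ w ∈ S, σ a ≤ σ w} = #{σ : α ≃ β | ∀ w ∈ S, σ b ≤ σ w} := by
  have hswap {w : α} (hw : w ∈ S) : Equiv.swap a b w ∈ S := by
    rw [Equiv.swap_apply_def]; split_ifs <;> assumption
  refine card_equiv ((Equiv.swap a b).equivCongr (Equiv.refl β)) fun σ => ?_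
  simp only [mem_filter, mem_univ, true_and, Equiv.equivCongr_apply_apply, Equiv.symm_swap,
    Equiv.refl_apply, Equiv.swap_apply_right]
  refine ⟨fun h w hw => h _ (hswap hw), fun h w hw => ?_⟩
  simpa using h _ (hswap hw)

lemma sum_card_filter_forall_le {S : Finset α} (hS : S.Nonempty) :
    ∑ b ∈ S, #{σ : α ≃ β | ∀ w ∈ S, σ b ≤ σ w} = Fintype.card (α ≃ β) := by
  have hmin (σ : α ≃ β) : #{b ∈ S | ∀ w ∈ S, σ b ≤ σ w} = 1 := by
    obtain ⟨b, hb, hbmin⟩ := S.exists_min_image σ hS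
    refine card_eq_one.2 ⟨b, ext fun x => ?_⟩
    simp only [mem_filter, mem_singleton]
    refine ⟨fun ⟨hx, hxmin⟩ => σ.injective (le_antisymm (hxmin b hb) (hbmin x hx)), ?_⟩
    rintro rfl
    exact ⟨hb, hbmin⟩
  calc ∑ b ∈ S, #{σ : α ≃ β | ∀ w ∈ S, σ b ≤ σ w}
      = ∑ σ : α ≃ β, #{b ∈ S | ∀ w ∈ S, σ b ≤ σ w} :=
        sum_card_bipartiteAbove_eq_sum_card_bipartiteBelow
          (fun b (σ : α ≃ β) => ∀ w ∈ S, σ b ≤ σ w)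
    _ = Fintype.card (α ≃ β) := by simp [hmin]

lemma card_filter_forall_le_mul_card {S : Finset α} {u : α} (hu : u ∈ S) :
    #{σ : α ≃ β | ∀ w ∈ S, σ u ≤ σ w} * #S = Fintype.card (α ≃ β) := by
  rw [← sum_card_filter_forall_le ⟨u, hu⟩, mul_comm, ← smul_eq_mul, ← sum_const]
  exact sum_congr rfl fun b hb => card_filter_forall_le_eq_of_mem hu hb

end Orderings

namespace SimpleGraph

variable {V : Type*} (G : SimpleGraph V)

lemma zeroForcingNumber_le_card [Fintype V] {Z : Finset V} (hZ : G.IsZeroForcingSet Z) :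
    G.zeroForcingNumber ≤ #Z :=
  Nat.sInf_le ⟨Z, rfl, hZ⟩

variable [Fintype V] [DecidableEq V] [DecidableRel G.Adj] {β : Type*} [LinearOrder β]

def orderForcingSet (f : V → β) : Finset V :=
  {u | ∀ v ∈ G.neighborFinset u, ¬ ∀ w ∈ insert v (G.neighborFinset v), f u ≤ f w}

lemma isZeroForcingSet_orderForcingSet {f : V → β} (hf : Function.Injective f) :
    G.IsZeroForcingSet (G.orderForcingSet f) := by
  classical
  by_contra! h
  obtain ⟨u, hu, hmax⟩ := exists_max_image {v | ¬ G.ZeroForces (G.orderForcingSet f) v} f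
    (by simpa [Finset.Nonempty, IsZeroForcingSet] using h)
  replace hu : ¬ G.ZeroForces (G.orderForcingSet f) u := (mem_filter.1 hu).2
  obtain ⟨v, huv, hfirst⟩ : ∃ v ∈ G.neighborFinset u,
      ∀ w ∈ insert v (G.neighborFinset v), f u ≤ f w := by
    by_contra h'
    exact hu (.base (by simpa [orderForcingSet] using not_exists.1 h'))
  have hforced : ∀ w ∈ insert v (G.neighborFinset v), w ≠ u →
      G.ZeroForces (G.orderForcingSet f) w := fun w hw hwu => by
    by_contra hw'
    exact hwu (hf (le_antisymm (hmax w (by simpa using hw')) (hfirst w hw)))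
  rw [mem_neighborFinset] at huv
  exact hu (.force (hforced v (mem_insert_self _ _) huv.ne') huv.symm fun w hw hwu =>
    hforced w (mem_insert_of_mem ((mem_neighborFinset _ _ _).2 hw)) hwu)

lemma sum_card_orderForcingSet [Fintype β] :
    ∑ σ : V ≃ β, (#(G.orderForcingSet σ) : ℝ) =
      Fintype.card (V ≃ β) * ∑ u, ∑ I ∈ (G.neighborFinset u).powerset, (-1 : ℝ) ^ #I *
        (#(insert u (I.biUnion fun v => insert v (G.neighborFinset v))) : ℝ)⁻¹ := by
  set S : V → Finset V → Finset V :=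
    fun u I => insert u (I.biUnion fun v => insert v (G.neighborFinset v))
  have hfirst (σ : V ≃ β) (u : V) (I : Finset V) :
      (∀ v ∈ I, ∀ w ∈ insert v (G.neighborFinset v), σ u ≤ σ w) ↔ ∀ w ∈ S u I, σ u ≤ σ w := by
    rw [forall_mem_insert]
    simp only [le_refl, true_and, mem_biUnion, forall_exists_index, and_imp]
    exact ⟨fun h w v hv hw => h v hv w hw, fun h v hv w hw => h w v hv hw⟩
  have hcount (u : V) (I : Finset V) :
      ∑ σ : V ≃ β, (if ∀ w ∈ S u I, σ u ≤ σ w then 1 else 0 : ℝ) =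
        Fintype.card (V ≃ β) * (#(S u I) : ℝ)⁻¹ := by
    have hu : u ∈ S u I := mem_insert_self _ _
    rw [sum_boole, eq_mul_inv_iff_mul_eq₀ (Nat.cast_ne_zero.2 (card_ne_zero_of_mem hu))]
    exact_mod_cast card_filter_forall_le_mul_card hu
  calc ∑ σ : V ≃ β, (#(G.orderForcingSet σ) : ℝ)
      = ∑ σ : V ≃ β, ∑ u, ∑ I ∈ (G.neighborFinset u).powerset,
          (-1 : ℝ) ^ #I * (if ∀ w ∈ S u I, σ u ≤ σ w then 1 else 0) := by
        refine sum_congr rfl fun σ _ => ?_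
        rw [orderForcingSet, ← sum_boole]
        refine sum_congr rfl fun u _ => ?_
        convert (sum_powerset_neg_one_pow_card_mul_boole (R := ℝ) (G.neighborFinset u)
          fun v => ∀ w ∈ insert v (G.neighborFinset v), σ u ≤ σ w).symm using 4
        exact (hfirst σ u _).symm
    _ = ∑ u, ∑ I ∈ (G.neighborFinset u).powerset,
          (-1 : ℝ) ^ #I * ∑ σ : V ≃ β, (if ∀ w ∈ S u I, σ u ≤ σ w then 1 else 0) := by
        simp_rw [mul_sum]
        rw [sum_comm]
        exact sum_congr rfl fun u _ => sum_comm
    _ = _ := by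
        simp only [hcount, mul_sum]
        exact sum_congr rfl fun u _ => sum_congr rfl fun I _ => mul_left_comm _ _ _

end SimpleGraph

theorem stmt8 {V : Type*} [Fintype V] [DecidableEq V] (G : SimpleGraph V)
    [DecidableRel G.Adj] :
    (G.zeroForcingNumber : ℝ) ≤
      ∑ u : V, ∑ i ∈ Finset.range (G.degree u + 1), (-1 : ℝ) ^ i *
        ∑ I ∈ (G.neighborFinset u).powersetCard i,
          ((insert u (I.biUnion fun v => insert v (G.neighborFinset v))).card : ℝ)⁻¹ := by
  have hpos : (0 : ℝ) < Fintype.card (V ≃ Fin (Fintype.card V)) :=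
    mod_cast Fintype.card_pos_iff.2 ⟨Fintype.equivFin V⟩
  rw [← mul_le_mul_iff_right₀ hpos]
  calc Fintype.card (V ≃ Fin (Fintype.card V)) * (G.zeroForcingNumber : ℝ)
      = ∑ _σ : V ≃ Fin (Fintype.card V), (G.zeroForcingNumber : ℝ) := by simp
    _ ≤ ∑ σ : V ≃ Fin (Fintype.card V), (#(G.orderForcingSet σ) : ℝ) :=
        sum_le_sum fun σ _ => mod_cast
          G.zeroForcingNumber_le_card (G.isZeroForcingSet_orderForcingSet σ.injective)
    _ = _ := by
        rw [G.sum_card_orderForcingSet]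
        congr 1
        refine sum_congr rfl fun u _ => ?_
        rw [sum_powerset, G.card_neighborFinset_eq_degree]
        refine sum_congr rfl fun i _ => ?_
        rw [mul_sum]
        exact sum_congr rfl fun I hI => by rw [(mem_powersetCard.1 hI).2]
end

section
/- If G is an r-regular graph of order n with girth at least 5, then Z(G) ≤ n · ∏_{i=1}^{r} (1 − 1/(r·i + 1)). -/
open Finset

section Girth
open SimpleGraph
variable {V : Type*} {G : SimpleGraph V}


variable {V : Type*} {G : SimpleGraph V}

lemma no_triangle (hg : 5 ≤ G.egirth) {a b c : V} (hab : G.Adj a b) (hbc : G.Adj b c)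
    (hca : G.Adj c a) : False := by
  have hcyc : (Walk.cons hab (Walk.cons hbc (Walk.cons hca Walk.nil))).IsCycle := by
    rw [Walk.isCycle_def]
    refine ⟨?_, by simp, ?_⟩
    · rw [Walk.isTrail_def]
      simp [hab.ne, hbc.ne, hca.ne, hab.ne', hbc.ne', hca.ne', Sym2.eq_iff]
    · simp [hab.ne, hbc.ne, hca.ne, hab.ne', hbc.ne', hca.ne']
  have := SimpleGraph.le_egirth.mp hg a _ hcyc
  simp only [Walk.length_cons, Walk.length_nil] at this
  exact absurd this (by decide)

lemma no_C4 (hg : 5 ≤ G.egirth) {a b c d : V} (hac : a ≠ c) (hbd : b ≠ d) (hab : G.Adj a b)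
    (hbc : G.Adj b c) (hcd : G.Adj c d) (hda : G.Adj d a) : False := by
  have hcyc : (Walk.cons hab (Walk.cons hbc (Walk.cons hcd (Walk.cons hda Walk.nil)))).IsCycle := by
    rw [Walk.isCycle_def]
    refine ⟨?_, by simp, ?_⟩
    · rw [Walk.isTrail_def]
      simp [hab.ne, hbc.ne, hcd.ne, hda.ne, hab.ne', hbc.ne', hcd.ne', hda.ne', Sym2.eq_iff, hac,
        hbd, hac.symm, hbd.symm]
    · simp [hab.ne, hbc.ne, hcd.ne, hda.ne, hab.ne', hbc.ne', hcd.ne', hda.ne', hac, hbd,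
        hac.symm, hbd.symm]
  have := SimpleGraph.le_egirth.mp hg a _ hcyc
  simp only [Walk.length_cons, Walk.length_nil] at this
  exact absurd this (by decide)

end Girth

section Book
open SimpleGraph
variable {V : Type*} {G : SimpleGraph V}
variable [Fintype V] [DecidableEq V] [DecidableRel G.Adj] {r : ℕ}

/-- closed neighborhood as a Finset -/
def SimpleGraph.cnbr (G : SimpleGraph V) [Fintype V] [DecidableRel G.Adj] (v : V) : Finset V :=
  insert v (G.neighborFinset v)

lemma card_cnbr (hreg : G.IsRegularOfDegree r) (v : V) : (G.cnbr v).card = r + 1 := by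
  rw [cnbr, Finset.card_insert_of_notMem (by simp), card_neighborFinset_eq_degree, hreg v]

lemma mem_cnbr {v z : V} : z ∈ G.cnbr v ↔ z = v ∨ G.Adj v z := by
  simp [cnbr]

lemma book_card (hreg : G.IsRegularOfDegree r) (hg : 5 ≤ G.egirth) (u : V)
    (t : Finset V) (ht : t ⊆ G.neighborFinset u) :
    (insert u (t.biUnion fun v => G.cnbr v)).card = r * t.card + 1 := by
  classical
  induction t using Finset.induction_on with
  | empty => simp
  | insert v s hv hs =>
    have hins : insert v s ⊆ G.neighborFinset u := ht
    have hvu : G.Adj u v := by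
      have := hins (Finset.mem_insert_self v s); rwa [mem_neighborFinset] at this
    have hsub : s ⊆ G.neighborFinset u := fun x hx => hins (Finset.mem_insert_of_mem hx)
    have IH := hs hsub
    have hbi : (insert v s).biUnion (fun w => G.cnbr w) = G.cnbr v ∪ s.biUnion fun w => G.cnbr w :=
      Finset.biUnion_insert ..
    have hre : insert u ((insert v s).biUnion fun w => G.cnbr w)
        = G.cnbr v ∪ insert u (s.biUnion fun w => G.cnbr w) := by
      rw [hbi]
      ext z
      simp only [Finset.mem_insert, Finset.mem_union]
      tauto
    have hint : G.cnbr v ∩ insert u (s.biUnion fun w => G.cnbr w) = {u} := by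
      ext z
      simp only [Finset.mem_inter, Finset.mem_insert, Finset.mem_singleton, Finset.mem_biUnion]
      constructor
      · rintro ⟨hz1, hz2⟩
        by_contra hzu
        rcases hz2 with rfl | ⟨v', hv's, hz2⟩
        · exact hzu rfl
        · have hv'u : G.Adj u v' := by
            have := hsub hv's; rwa [mem_neighborFinset] at this
          have hvv' : v ≠ v' := fun h => hv (h ▸ hv's)
          rcases mem_cnbr.mp hz1 with rfl | hvz
          · rcases mem_cnbr.mp hz2 with h | h
            · exact hvv' h
            · exact no_triangle hg hvu h.symm hv'u.symm
          · rcases mem_cnbr.mp hz2 with rfl | hv'z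
            · exact no_triangle hg hvu hvz hv'u.symm
            · exact no_C4 hg (fun h => hzu h.symm) hvv' hvu hvz hv'z.symm hv'u.symm
      · rintro rfl
        refine ⟨mem_cnbr.mpr (Or.inr hvu.symm), Or.inl rfl⟩
    have hcard := Finset.card_union_add_card_inter (G.cnbr v)
      (insert u (s.biUnion fun w => G.cnbr w))
    rw [hint, hre] at *
    have : (G.cnbr v ∪ insert u (s.biUnion fun w => G.cnbr w)).card + 1
        = (r + 1) + (r * s.card + 1) := by
      rw [← card_cnbr hreg v, ← IH]
      simpa using hcard
    rw [Finset.card_insert_of_notMem hv, Nat.mul_succ]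
    omega
end Book


section Count
variable {V : Type*} [Fintype V] [DecidableEq V]



local notation "Ω" V => (V ≃ Fin (Fintype.card V))

lemma filter_min_card_eq (T : Finset V) {u t : V} (hu : u ∈ T) (ht : t ∈ T) :
    ((univ : Finset (Ω V)).filter (fun π => ∀ z ∈ T, z ≠ u → π u < π z)).card
    = ((univ : Finset (Ω V)).filter (fun π => ∀ z ∈ T, z ≠ t → π t < π z)).card := by
  apply Finset.card_bij' (fun π _ => (Equiv.swap u t).trans π)
    (fun π _ => (Equiv.swap u t).trans π)
  · intro π hπ
    simp only [mem_filter, mem_univ, true_and] at hπ ⊢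
    intro z hz hzt
    have h1 : (Equiv.swap u t) t = u := Equiv.swap_apply_right u t
    have h2 : Equiv.swap u t z ∈ T := by
      rcases eq_or_ne z u with rfl | hzu
      · rwa [Equiv.swap_apply_left]
      · rwa [Equiv.swap_apply_of_ne_of_ne hzu hzt]
    have h3 : Equiv.swap u t z ≠ u := by
      intro h
      have := (Equiv.swap u t).injective (h.trans h1.symm)
      exact hzt this
    have := hπ _ h2 h3
    simpa [h1] using this
  · intro π hπ
    simp only [mem_filter, mem_univ, true_and] at hπ ⊢
    intro z hz hzu
    have h1 : (Equiv.swap u t) u = t := Equiv.swap_apply_left u t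
    have h2 : Equiv.swap u t z ∈ T := by
      rcases eq_or_ne z t with rfl | hzt
      · rwa [Equiv.swap_apply_right]
      · rwa [Equiv.swap_apply_of_ne_of_ne hzu hzt]
    have h3 : Equiv.swap u t z ≠ t := by
      intro h
      have := (Equiv.swap u t).injective (h.trans h1.symm)
      exact hzu this
    have := hπ _ h2 h3
    simpa [h1] using this
  · intro π _
    ext x; simp
  · intro π _
    ext x; simp

lemma count_min (T : Finset V) {u : V} (hu : u ∈ T) :
    ((univ : Finset (Ω V)).filter (fun π => ∀ z ∈ T, z ≠ u → π u < π z)).card * T.card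
    = (Fintype.card V).factorial := by
  have key : ∑ t ∈ T, ((univ : Finset (Ω V)).filter
      (fun π => ∀ z ∈ T, z ≠ t → π t < π z)).card = (Fintype.card V).factorial := by
    have swap : ∑ t ∈ T, ((univ : Finset (Ω V)).filter
        (fun π => ∀ z ∈ T, z ≠ t → π t < π z)).card
        = ∑ π : (Ω V), (T.filter (fun t => ∀ z ∈ T, z ≠ t → π t < π z)).card := by
      simp only [Finset.card_filter]
      rw [Finset.sum_comm' ]
      · simp
    rw [swap]
    have hone : ∀ π : (Ω V), (T.filter (fun t => ∀ z ∈ T, z ≠ t → π t < π z)).card = 1 := by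
      intro π
      obtain ⟨m, hm, hmin⟩ := T.exists_min_image (fun z => π z) ⟨u, hu⟩
      rw [Finset.card_eq_one]
      refine ⟨m, ?_⟩
      ext t
      simp only [mem_filter, mem_singleton]
      constructor
      · rintro ⟨htT, hpt⟩
        by_contra htm
        exact absurd (hpt m hm (fun h => htm h.symm)) (not_lt.mpr (hmin t htT))
      · rintro rfl
        refine ⟨hm, fun z hz hzm => lt_of_le_of_ne (hmin z hz) ?_⟩
        intro h
        exact hzm (π.injective h).symm
    rw [Finset.sum_congr rfl (fun π _ => hone π)]
    simp [Fintype.card_equiv (Fintype.equivFin V)]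
  calc ((univ : Finset (Ω V)).filter (fun π => ∀ z ∈ T, z ≠ u → π u < π z)).card * T.card
      = ∑ t ∈ T, ((univ : Finset (Ω V)).filter (fun π => ∀ z ∈ T, z ≠ u → π u < π z)).card := by
        rw [Finset.sum_const, smul_eq_mul, mul_comm]
    _ = _ := by
        rw [Finset.sum_congr rfl (fun t ht => filter_min_card_eq T hu ht)]
        exact key

end Count


lemma prod_pos_aux (n : ℕ) {x : ℝ} (hx : 0 < x) : 0 < ∏ k ∈ range n, (x + k) :=
  Finset.prod_pos fun k _ => by positivity

lemma partial_fractions (n : ℕ) : ∀ (x : ℝ), 0 < x →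
    ∑ i ∈ range (n + 1), (-1 : ℝ) ^ i * (n.choose i : ℝ) / (x + i)
      = (n.factorial : ℝ) / ∏ k ∈ range (n + 1), (x + k) := by
  induction n with
  | zero => intro x hx; simp
  | succ n IH =>
    intro x hx
    have hx1 : (0:ℝ) < x + 1 := by linarith
    set g : ℕ → ℝ := fun i => (-1 : ℝ) ^ i * (n.choose i : ℝ) / (x + i) with hg
    have key : ∑ i ∈ range (n + 2), (-1 : ℝ) ^ i * ((n+1).choose i : ℝ) / (x + i)
        = (∑ i ∈ range (n + 1), g i)
          - ∑ j ∈ range (n + 1), (-1 : ℝ) ^ j * (n.choose j : ℝ) / ((x+1) + j) := by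
      rw [Finset.sum_range_succ' (fun i => (-1 : ℝ) ^ i * ((n+1).choose i : ℝ) / (x + i)) (n+1)]
      have expand : ∀ j ∈ range (n+1),
          (-1 : ℝ) ^ (j+1) * ((n+1).choose (j+1) : ℝ) / (x + ((j+1 : ℕ) : ℝ))
          = g (j+1) - (-1 : ℝ) ^ j * (n.choose j : ℝ) / ((x+1) + j) := by
        intro j _
        rw [hg]
        simp only [Nat.choose_succ_succ]
        push_cast
        have h1 : x + ((j:ℝ) + 1) ≠ 0 := by positivity
        have h2 : (x + 1) + (j:ℝ) ≠ 0 := by positivity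
        rw [show x + ((j:ℝ)+1) = (x+1) + (j:ℝ) by ring] at h1 ⊢
        field_simp
        ring
      rw [Finset.sum_congr rfl expand, Finset.sum_sub_distrib]
      have hlast : (∑ j ∈ range (n+1), g (j+1)) + (-1:ℝ)^0 * (((n+1).choose 0 : ℕ) : ℝ) / (x + ((0:ℕ):ℝ))
          = ∑ i ∈ range (n + 1), g i := by
        have : (∑ j ∈ range (n+1), g (j+1)) + g 0 = ∑ i ∈ range (n + 2), g i :=
          (Finset.sum_range_succ' g (n+1)).symm
        rw [show (-1:ℝ)^0 * (((n+1).choose 0 : ℕ) : ℝ) / (x + ((0:ℕ):ℝ)) = g 0 by simp [hg], this,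
          Finset.sum_range_succ]
        have : g (n+1) = 0 := by simp [hg, Nat.choose_succ_self]
        rw [this, add_zero]
      rw [sub_add_eq_add_sub, hlast]
    rw [key, IH x hx, IH (x+1) hx1]
    set P1 : ℝ := ∏ k ∈ range (n + 1), (x + k) with hP1
    set P2 : ℝ := ∏ k ∈ range (n + 1), ((x+1) + k) with hP2
    set Q : ℝ := ∏ k ∈ range (n + 2), (x + k) with hQ
    have hsplit1 : Q = P1 * (x + ((n:ℝ)+1)) := by
      rw [hQ, hP1, Finset.prod_range_succ]; push_cast; ring
    have hsplit2 : Q = x * P2 := by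
      rw [hQ, hP2, Finset.prod_range_succ' (fun k => x + (k:ℝ)) (n+1)]
      have : ∀ k ∈ range (n+1), x + (((k+1:ℕ)):ℝ) = (x+1) + (k:ℝ) := by
        intro k _; push_cast; ring
      rw [Finset.prod_congr rfl this]
      push_cast; ring
    have h1 : (0:ℝ) < P1 := prod_pos_aux _ hx
    have h2 : (0:ℝ) < P2 := prod_pos_aux _ hx1
    have h3 : (0:ℝ) < Q := prod_pos_aux _ hx
    rw [div_sub_div _ _ (ne_of_gt h1) (ne_of_gt h2), div_eq_div_iff (by positivity) (ne_of_gt h3)]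
    have expand2 : ((n.factorial:ℝ) * P2 - P1 * (n.factorial:ℝ)) * Q
        = (n.factorial:ℝ) * P2 * Q - P1 * (n.factorial:ℝ) * Q := by ring
    rw [expand2]
    nth_rewrite 1 [hsplit1]
    nth_rewrite 1 [hsplit2]
    rw [Nat.factorial_succ]
    push_cast
    ring




lemma main_identity (r : ℕ) :
    ∑ i ∈ range (r + 1), (-1 : ℝ) ^ i * (r.choose i : ℝ) * (1 / ((r : ℝ) * i + 1))
      = ∏ i ∈ Icc 1 r, (1 - 1 / ((r : ℝ) * i + 1)) := by
  rcases Nat.eq_zero_or_pos r with rfl | hr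
  · simp
  have hr0 : (0:ℝ) < r := by exact_mod_cast hr
  set x : ℝ := 1 / r with hxdef
  have hx : 0 < x := by positivity
  have h0 := partial_fractions r x hx
  -- convert LHS
  have hL : ∑ i ∈ range (r + 1), (-1 : ℝ) ^ i * (r.choose i : ℝ) * (1 / ((r : ℝ) * i + 1))
      = x * ∑ i ∈ range (r + 1), (-1 : ℝ) ^ i * (r.choose i : ℝ) / (x + i) := by
    rw [Finset.mul_sum]
    refine Finset.sum_congr rfl ?_
    intro i _
    have hxi : x + (i:ℝ) ≠ 0 := by positivity
    have hri : (r:ℝ) * i + 1 ≠ 0 := by positivity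
    have hxe : x + (i:ℝ) = ((r:ℝ)*i+1)/r := by rw [hxdef]; field_simp; ring
    rw [hxe, hxdef]
    rw [div_div_eq_mul_div]
    field_simp
  -- split range product
  have hB : ∏ k ∈ range (r + 1), (x + k) = x * ∏ i ∈ Icc 1 r, (x + i) := by
    have h1 : ∏ i ∈ Icc 1 r, (x + (i:ℝ)) = ∏ k ∈ range r, (x + ((1 + k : ℕ) : ℝ)) := by
      rw [← Finset.Ico_add_one_right_eq_Icc, Finset.prod_Ico_eq_prod_range]
      simp
    rw [Finset.prod_range_succ' (fun k => x + (k:ℝ)) r, h1]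
    simp only [Nat.cast_zero, add_zero]
    rw [mul_comm]
    congr 1
    exact Finset.prod_congr rfl fun k _ => by push_cast; ring
  -- convert RHS
  have hI : ∀ i ∈ Icc 1 r, (1 : ℝ) - 1 / ((r : ℝ) * i + 1) = (i : ℝ) / (x + i) := by
    intro i hi
    have hi1 : 1 ≤ i := (Finset.mem_Icc.mp hi).1
    have hi0 : (0:ℝ) < i := by exact_mod_cast hi1
    have hxi : x + (i:ℝ) ≠ 0 := by positivity
    have hri : (r:ℝ) * i + 1 ≠ 0 := by positivity
    rw [hxdef]
    field_simp
    ring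
  have hR : ∏ i ∈ Icc 1 r, (1 - 1 / ((r : ℝ) * i + 1))
      = (r.factorial : ℝ) / ∏ i ∈ Icc 1 r, (x + i) := by
    rw [Finset.prod_congr rfl hI, Finset.prod_div_distrib]
    congr 1
    rw [← Nat.cast_prod]
    congr 1
    rw [← Finset.Ico_add_one_right_eq_Icc, Finset.prod_Ico_eq_prod_range,
      ← Finset.prod_range_add_one_eq_factorial r]
    exact Finset.prod_congr (by simp) fun k _ => by omega
  rw [hL, h0, hB, hR]
  have hP : (0:ℝ) < ∏ i ∈ Icc 1 r, (x + i) :=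
    Finset.prod_pos fun i hi => by positivity
  rw [hxdef]
  field_simp

section ZFAux

variable {V : Type*} [Fintype V] [DecidableEq V] {G : SimpleGraph V} [DecidableRel G.Adj] {r : ℕ}

/-- u is uncolored for ordering π iff it is the π-minimum of the closed neighborhood
of one of its neighbors. -/
def unc (G : SimpleGraph V) [DecidableRel G.Adj] (π : V ≃ Fin (Fintype.card V)) (u : V) : Prop :=
  ∃ v ∈ G.neighborFinset u, ∀ z ∈ G.cnbr v, z ≠ u → π u < π z

instance (π : V ≃ Fin (Fintype.card V)) (u : V) : Decidable (unc G π u) := by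
  unfold unc; infer_instance

def coloredF (G : SimpleGraph V) [DecidableRel G.Adj] (π : V ≃ Fin (Fintype.card V)) : Finset V :=
  univ.filter (fun u => ¬ unc G π u)

lemma coloredF_forcing (π : V ≃ Fin (Fintype.card V)) :
    G.IsZeroForcingSet ↑(coloredF G π) := by
  have H : ∀ k : ℕ, ∀ u : V, Fintype.card V - (π u : ℕ) ≤ k → G.ZeroForces ↑(coloredF G π) u := by
    intro k
    induction k with
    | zero =>
      intro u hu
      exact absurd hu (by have := (π u).isLt; omega)
    | succ k IH =>
      intro u hu
      by_cases hc : u ∈ coloredF G π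
      · exact SimpleGraph.ZeroForces.base (by exact_mod_cast hc)
      · have hunc : unc G π u := by
          by_contra h
          exact hc (Finset.mem_filter.mpr ⟨Finset.mem_univ u, h⟩)
        obtain ⟨v, hv, hmin⟩ := hunc
        have hadj : G.Adj u v := (SimpleGraph.mem_neighborFinset G u v).mp hv
        have key : ∀ z, z ∈ G.cnbr v → z ≠ u → G.ZeroForces ↑(coloredF G π) z := by
          intro z hz hzu
          apply IH
          have hlt := hmin z hz hzu
          have h1 : (π u : ℕ) < (π z : ℕ) := hlt
          omega
        refine SimpleGraph.ZeroForces.force (v := v) ?_ hadj.symm ?_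
        · exact key v (Finset.mem_insert_self _ _) hadj.ne'
        · intro w hw hwu
          exact key w (Finset.mem_insert_of_mem ((SimpleGraph.mem_neighborFinset G v w).mpr hw)) hwu
  intro u
  exact H (Fintype.card V) u (by omega)

end ZFAux

section MainCount

open SimpleGraph Finset

variable {V : Type*} [Fintype V] [DecidableEq V] {G : SimpleGraph V} [DecidableRel G.Adj] {r : ℕ}

def Av (G : SimpleGraph V) [DecidableRel G.Adj] (π : V ≃ Fin (Fintype.card V)) (u v : V) : Prop :=
  ∀ z ∈ G.cnbr v, z ≠ u → π u < π z

instance (π : V ≃ Fin (Fintype.card V)) (u v : V) : Decidable (Av G π u v) := by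
  unfold Av; infer_instance

lemma ind_eq_prod (π : V ≃ Fin (Fintype.card V)) (u : V) :
    (if ¬ unc G π u then (1:ℝ) else 0)
      = ∏ v ∈ G.neighborFinset u, ((if Av G π u v then (-1:ℝ) else 0) + 1) := by
  by_cases h : unc G π u
  · rw [if_neg (by simpa using h)]
    obtain ⟨v0, hv0, hA⟩ := h
    symm
    apply Finset.prod_eq_zero hv0
    rw [if_pos (show Av G π u v0 from hA)]; ring
  · rw [if_pos h]
    symm
    apply Finset.prod_eq_one
    intro v hv
    have hnA : ¬ Av G π u v := fun hA => h ⟨v, hv, hA⟩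
    rw [if_neg hnA]; ring

lemma prod_Av_eq (π : V ≃ Fin (Fintype.card V)) (u : V) (t : Finset V) :
    ∏ v ∈ t, (if Av G π u v then (-1:ℝ) else 0)
      = (-1)^t.card * (if (∀ z ∈ insert u (t.biUnion (G.cnbr)), z ≠ u → π u < π z)
          then (1:ℝ) else 0) := by
  by_cases h : ∀ v ∈ t, Av G π u v
  · rw [Finset.prod_congr rfl (fun v hv => if_pos (h v hv)), Finset.prod_const]
    rw [if_pos, mul_one]
    intro z hz hzu
    rcases Finset.mem_insert.mp hz with rfl | hz'
    · exact absurd rfl hzu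
    · obtain ⟨v, hvt, hzv⟩ := Finset.mem_biUnion.mp hz'
      exact h v hvt z hzv hzu
  · push_neg at h
    obtain ⟨v, hvt, hnA⟩ := h
    have hz : (if Av G π u v then (-1:ℝ) else 0) = 0 := if_neg hnA
    rw [Finset.prod_eq_zero hvt hz, if_neg, mul_zero]
    intro hall
    apply hnA
    intro z hz hzu
    exact hall z (Finset.mem_insert_of_mem (Finset.mem_biUnion.mpr ⟨v, hvt, hz⟩)) hzu

lemma sum_ind_min (hreg : G.IsRegularOfDegree r) (hg : 5 ≤ G.egirth) (u : V) (t : Finset V)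
    (ht : t ⊆ G.neighborFinset u) :
    ∑ π : V ≃ Fin (Fintype.card V),
        (if (∀ z ∈ insert u (t.biUnion (G.cnbr)), z ≠ u → π u < π z) then (1:ℝ) else 0)
      = ((Fintype.card V).factorial : ℝ) / ((r : ℝ) * t.card + 1) := by
  set T : Finset V := insert u (t.biUnion (G.cnbr)) with hT
  have huT : u ∈ T := Finset.mem_insert_self _ _
  have hcount := count_min T huT
  have hcard : T.card = r * t.card + 1 := book_card hreg hg u t ht
  rw [Finset.sum_boole]
  rw [hcard] at hcount
  have hpos : (0:ℝ) < (r : ℝ) * t.card + 1 := by positivity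
  rw [eq_div_iff (ne_of_gt hpos)]
  exact_mod_cast hcount

lemma per_u (hreg : G.IsRegularOfDegree r) (hg : 5 ≤ G.egirth) (u : V) :
    ∑ π : V ≃ Fin (Fintype.card V), (if ¬ unc G π u then (1:ℝ) else 0)
      = ((Fintype.card V).factorial : ℝ) * ∏ i ∈ Icc 1 r, (1 - 1/((r:ℝ)*i+1)) := by
  have hdeg : (G.neighborFinset u).card = r := by
    rw [card_neighborFinset_eq_degree]; exact hreg u
  calc ∑ π : V ≃ Fin (Fintype.card V), (if ¬ unc G π u then (1:ℝ) else 0)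
      = ∑ π : V ≃ Fin (Fintype.card V),
          ∏ v ∈ G.neighborFinset u, ((if Av G π u v then (-1:ℝ) else 0) + 1) :=
        Finset.sum_congr rfl fun π _ => ind_eq_prod π u
    _ = ∑ π : V ≃ Fin (Fintype.card V), ∑ t ∈ (G.neighborFinset u).powerset,
          (∏ v ∈ t, (if Av G π u v then (-1:ℝ) else 0)) := by
        refine Finset.sum_congr rfl fun π _ => ?_
        rw [Finset.prod_add]
        refine Finset.sum_congr rfl fun t _ => ?_
        simp
    _ = ∑ t ∈ (G.neighborFinset u).powerset, ∑ π : V ≃ Fin (Fintype.card V),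
          (∏ v ∈ t, (if Av G π u v then (-1:ℝ) else 0)) := Finset.sum_comm
    _ = ∑ t ∈ (G.neighborFinset u).powerset,
          ((-1:ℝ)^t.card * (((Fintype.card V).factorial : ℝ) / ((r : ℝ) * t.card + 1))) := by
        refine Finset.sum_congr rfl fun t htp => ?_
        rw [Finset.sum_congr rfl fun π _ => prod_Av_eq π u t, ← Finset.mul_sum,
          sum_ind_min hreg hg u t (Finset.mem_powerset.mp htp)]
    _ = ∑ m ∈ range (r + 1), r.choose m
          • ((-1:ℝ)^m * (((Fintype.card V).factorial : ℝ) / ((r : ℝ) * m + 1))) := by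
        have h := (Finset.sum_powerset_apply_card
          (fun m => ((-1:ℝ)^m * (((Fintype.card V).factorial : ℝ) / ((r : ℝ) * m + 1))))
          (x := G.neighborFinset u))
        rw [hdeg] at h
        exact h
    _ = ((Fintype.card V).factorial : ℝ)
          * ∑ m ∈ range (r + 1), (-1:ℝ)^m * (r.choose m : ℝ) * (1 / ((r : ℝ) * m + 1)) := by
        rw [Finset.mul_sum]
        refine Finset.sum_congr rfl fun m _ => ?_
        rw [nsmul_eq_mul]
        ring
    _ = ((Fintype.card V).factorial : ℝ) * ∏ i ∈ Icc 1 r, (1 - 1/((r:ℝ)*i+1)) := by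
        rw [main_identity r]

lemma total_sum (hreg : G.IsRegularOfDegree r) (hg : 5 ≤ G.egirth) :
    ∑ π : V ≃ Fin (Fintype.card V), ((coloredF G π).card : ℝ)
      = (Fintype.card V : ℝ) * (((Fintype.card V).factorial : ℝ)
          * ∏ i ∈ Icc 1 r, (1 - 1/((r:ℝ)*i+1))) := by
  have step : ∀ π : V ≃ Fin (Fintype.card V),
      ((coloredF G π).card : ℝ) = ∑ u : V, (if ¬ unc G π u then (1:ℝ) else 0) := by
    intro π
    rw [coloredF, ← Finset.sum_boole]
  rw [Finset.sum_congr rfl fun π _ => step π, Finset.sum_comm,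
    Finset.sum_congr rfl fun u _ => per_u hreg hg u, Finset.sum_const, Finset.card_univ,
    nsmul_eq_mul]

end MainCount

theorem stmt9 {V : Type*} [Fintype V] (G : SimpleGraph V) [DecidableRel G.Adj] (r : ℕ)
    (hreg : G.IsRegularOfDegree r) (hg : 5 ≤ G.egirth) :
    (G.zeroForcingNumber : ℝ) ≤
      (Fintype.card V : ℝ) * ∏ i ∈ Finset.Icc 1 r, (1 - 1 / ((r : ℝ) * i + 1)) := by
  classical
  set n := Fintype.card V with hn
  obtain ⟨π₀, hπ₀u, hmin⟩ := Finset.exists_min_image (Finset.univ : Finset (V ≃ Fin (Fintype.card V)))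
    (fun π => (coloredF G π).card) ⟨Fintype.equivFin V, Finset.mem_univ _⟩
  have hZF : G.zeroForcingNumber ≤ (coloredF G π₀).card :=
    Nat.sInf_le ⟨coloredF G π₀, rfl, coloredF_forcing π₀⟩
  have htot := total_sum (G := G) hreg hg
  have hΩcard : (Finset.univ : Finset (V ≃ Fin (Fintype.card V))).card = n.factorial := by
    rw [Finset.card_univ, Fintype.card_equiv (Fintype.equivFin V)]
  have hsum_ge : (n.factorial : ℝ) * ((coloredF G π₀).card : ℝ)
      ≤ ∑ π : V ≃ Fin (Fintype.card V), ((coloredF G π).card : ℝ) := by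
    calc (n.factorial : ℝ) * ((coloredF G π₀).card : ℝ)
        = ∑ _π : V ≃ Fin (Fintype.card V), ((coloredF G π₀).card : ℝ) := by
          rw [Finset.sum_const, hΩcard, nsmul_eq_mul]
      _ ≤ _ := by
          refine Finset.sum_le_sum fun π _ => ?_
          exact_mod_cast hmin π (Finset.mem_univ π)
  rw [htot] at hsum_ge
  have hfac : (0:ℝ) < (n.factorial : ℝ) := by positivity
  have hc : ((coloredF G π₀).card : ℝ) ≤ (n : ℝ) * ∏ i ∈ Finset.Icc 1 r, (1 - 1 / ((r : ℝ) * i + 1)) := by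
    nlinarith [hsum_ge, hfac]
  calc (G.zeroForcingNumber : ℝ) ≤ ((coloredF G π₀).card : ℝ) := by exact_mod_cast hZF
    _ ≤ _ := hc
end

section
/- If G is a graph of girth g ∈ {5, 6} and minimum degree δ ≥ 2, then Z(G) ≥ (g − 2)(δ − 2) + 2. -/
/-!
Let `Z` be a zero forcing set. Whenever `Z ∪ N[U]` is not yet everything, the forcing process
must leave it at some point: a vertex `u ∈ Z ∪ N[U]` forces `w ∉ Z ∪ N[U]`, and then
`N[u] ⊆ Z ∪ N[U] ∪ {w}`. Starting from `U = ∅` this yields, for every `k ≤ |V|`, a set `U` of `k`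
vertices with `|N[U]| ≤ |Z| + k`.

On the other hand `|N[U]| ≥ ∑_{u ∈ U} (deg u + 1) - L`, and double counting bounds twice the
overcount `L` by the sum over ordered pairs of `U` of `2·[u ~ v]` plus the number of common
neighbours of `u` and `v` outside `U`. Short cycles being excluded, this pair sum is at most `8`
when `|U| = 3` and the girth is at least `5`, and at most `12` when `|U| = 4` and the girth is at
least `6`: a case analysis on the edges inside `U`. Hence `|Z| ≥ 3δ - 4` for girth `5` and
`|Z| ≥ 4δ - 6` for girth `6`.
-/

namespace Finset

theorem sum_offDiag_eq_sum_sum_erase {α M : Type*} [DecidableEq α] [AddCommMonoid M]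
    (s : Finset α) (f : α × α → M) :
    ∑ p ∈ s.offDiag, f p = ∑ x ∈ s, ∑ y ∈ s.erase x, f (x, y) :=
  sum_finset_product _ _ _ fun p => by
    simp only [mem_offDiag, mem_erase]
    tauto

variable {α M : Type*} [DecidableEq α] [AddCommMonoid M] {f : α → α → M} {a b c d : α}

theorem sum_offDiag_three_of_comm (hf : ∀ x y, f x y = f y x) (hab : a ≠ b) (hac : a ≠ c)
    (hbc : b ≠ c) :
    ∑ p ∈ ({a, b, c} : Finset α).offDiag, f p.1 p.2 = 2 • (f a b + f a c + f b c) := by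
  rw [sum_offDiag_eq_sum_sum_erase]
  simp only [mem_insert, mem_singleton, hab, hac, hbc, or_self, not_false_eq_true, sum_insert,
    erase_insert_eq_erase, erase_eq_of_notMem, sum_singleton, ne_eq, erase_insert_of_ne,
    erase_singleton, insert_empty_eq, hf b a, hf c a, hf c b, smul_add]
  abel

theorem sum_offDiag_four_of_comm (hf : ∀ x y, f x y = f y x) (hab : a ≠ b) (hac : a ≠ c)
    (had : a ≠ d) (hbc : b ≠ c) (hbd : b ≠ d) (hcd : c ≠ d) :
    ∑ p ∈ ({a, b, c, d} : Finset α).offDiag, f p.1 p.2 =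
      2 • (f a b + f a c + f a d + f b c + f b d + f c d) := by
  rw [sum_offDiag_eq_sum_sum_erase]
  simp only [mem_insert, mem_singleton, hab, hac, had, hbc, hbd, hcd, or_self, not_false_eq_true,
    sum_insert, erase_insert_eq_erase, erase_eq_of_notMem, sum_singleton, ne_eq,
    erase_insert_of_ne, erase_singleton, insert_empty_eq, hf b a, hf c a, hf d a, hf c b, hf d b,
    hf d c, smul_add]
  abel

end Finset

namespace SimpleGraph

variable {V : Type*} {G : SimpleGraph V} {a b c d e : V}

theorem egirth_le_three (hab : G.Adj a b) (hbc : G.Adj b c) (hca : G.Adj c a) :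
    G.egirth ≤ 3 := by
  have hw : (Walk.cons hab (Walk.cons hbc (Walk.cons hca Walk.nil))).IsCycle := by
    simp [Walk.isCycle_def, hab.ne, hbc.ne, hca.ne, hab.ne', hca.ne']
  exact egirth_le_length hw

theorem egirth_le_four (hac : a ≠ c) (hbd : b ≠ d) (hab : G.Adj a b) (hbc : G.Adj b c)
    (hcd : G.Adj c d) (hda : G.Adj d a) : G.egirth ≤ 4 := by
  have hw : (Walk.cons hab (Walk.cons hbc (Walk.cons hcd (Walk.cons hda Walk.nil)))).IsCycle := by
    simp [Walk.isCycle_def, hab.ne, hbc.ne, hcd.ne, hda.ne, hab.ne', hda.ne', hac, hbd, hac.symm]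
  exact egirth_le_length hw

theorem egirth_le_five (hac : a ≠ c) (had : a ≠ d) (hbd : b ≠ d) (hbe : b ≠ e) (hce : c ≠ e)
    (hab : G.Adj a b) (hbc : G.Adj b c) (hcd : G.Adj c d) (hde : G.Adj d e) (hea : G.Adj e a) :
    G.egirth ≤ 5 := by
  have hw : (Walk.cons hab (Walk.cons hbc (Walk.cons hcd (Walk.cons hde
      (Walk.cons hea Walk.nil))))).IsCycle := by
    simp [Walk.isCycle_def, hab.ne, hbc.ne, hcd.ne, hde.ne, hea.ne, hab.ne', hea.ne', hac, had,
      hbd, hbe, hce, hac.symm, had.symm]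
  exact egirth_le_length hw

theorem egirth_le_card [Fintype V] (h : ¬G.IsAcyclic) : G.egirth ≤ Fintype.card V := by
  obtain ⟨a, w, hw, hlen⟩ := exists_egirth_eq_length.2 h
  rw [hlen, Nat.cast_le]
  simpa [Walk.length_support] using hw.support_nodup.length_le_card

theorem ZeroForces.exists_forcing_edge {Z S : Set V} {v : V} (hv : G.ZeroForces Z v)
    (hZS : Z ⊆ S) (hvS : v ∉ S) :
    ∃ u w, u ∈ S ∧ G.Adj u w ∧ w ∉ S ∧ ∀ x, G.Adj u x → x ≠ w → x ∈ S := by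
  induction hv with
  | base h => exact absurd (hZS h) hvS
  | @force u w _ hadj _ ihu ihx =>
    by_cases hu : u ∈ S
    · by_cases hrest : ∀ x, G.Adj u x → x ≠ w → x ∈ S
      · exact ⟨u, w, hu, hadj, hvS, hrest⟩
      · push Not at hrest
        obtain ⟨x, hux, hxw, hxS⟩ := hrest
        exact ihx x hux hxw hxS
    · exact ihu hu

variable [Fintype V] [DecidableEq V] [DecidableRel G.Adj]

variable (G) in
def closedNeighborFinset (U : Finset V) : Finset V :=
  U.biUnion fun u => insert u (G.neighborFinset u)

theorem mem_closedNeighborFinset {U : Finset V} {x : V} :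
    x ∈ G.closedNeighborFinset U ↔ ∃ u ∈ U, x = u ∨ G.Adj u x := by
  simp [closedNeighborFinset]

theorem closedNeighborFinset_insert (u : V) (U : Finset V) :
    G.closedNeighborFinset (insert u U) =
      insert u (G.neighborFinset u) ∪ G.closedNeighborFinset U :=
  Finset.biUnion_insert

theorem IsZeroForcingSet.exists_closedNeighborFinset_insert_sdiff_subset {Z U : Finset V}
    (hZ : G.IsZeroForcingSet Z) (hU : U.card < Fintype.card V) :
    ∃ u ∉ U, ∃ w, G.closedNeighborFinset (insert u U) \ Z ⊆
      insert w (G.closedNeighborFinset U \ Z) := by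
  by_cases hcov : ∀ v, v ∈ Z ∨ v ∈ G.closedNeighborFinset U
  · obtain ⟨v, -, hvU⟩ := Finset.exists_mem_notMem_of_card_lt_card
      (s := U) (t := Finset.univ) (by simpa using hU)
    refine ⟨v, hvU, v, fun x hx => Finset.mem_insert_of_mem ?_⟩
    rw [Finset.mem_sdiff] at hx ⊢
    exact ⟨(hcov x).resolve_left hx.2, hx.2⟩
  push Not at hcov
  obtain ⟨v, hvZ, hvN⟩ := hcov
  obtain ⟨u, w, hu, huw, hw, hrest⟩ := (hZ v).exists_forcing_edge
    (S := ↑Z ∪ ↑(G.closedNeighborFinset U)) Set.subset_union_left (by simp [hvZ, hvN])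
  simp only [Set.mem_union, Finset.mem_coe] at hu hw hrest
  refine ⟨u, fun huU => hw (Or.inr (mem_closedNeighborFinset.2 ⟨u, huU, Or.inr huw⟩)), w,
    fun x hx => ?_⟩
  rw [closedNeighborFinset_insert, Finset.mem_sdiff, Finset.mem_union, Finset.mem_insert,
    mem_neighborFinset] at hx
  rw [Finset.mem_insert, Finset.mem_sdiff]
  obtain ⟨(rfl | hux) | hxN, hxZ⟩ := hx
  · exact Or.inr ⟨hu.resolve_left hxZ, hxZ⟩
  · by_cases hxw : x = w
    · exact Or.inl hxw
    · exact Or.inr ⟨(hrest x hux hxw).resolve_left hxZ, hxZ⟩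
  · exact Or.inr ⟨hxN, hxZ⟩

theorem IsZeroForcingSet.exists_card_closedNeighborFinset_sdiff_le {Z : Finset V}
    (hZ : G.IsZeroForcingSet Z) {k : ℕ} (hk : k ≤ Fintype.card V) :
    ∃ U : Finset V, U.card = k ∧ (G.closedNeighborFinset U \ Z).card ≤ k := by
  induction k with
  | zero => exact ⟨∅, rfl, by simp [closedNeighborFinset]⟩
  | succ k ih =>
    obtain ⟨U, hU, hUZ⟩ := ih (by omega)
    obtain ⟨u, huU, w, hsub⟩ := hZ.exists_closedNeighborFinset_insert_sdiff_subset (U := U)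
      (by omega)
    refine ⟨insert u U, by rw [Finset.card_insert_of_notMem huU, hU], ?_⟩
    exact (Finset.card_le_card hsub).trans ((Finset.card_insert_le _ _).trans (by omega))

variable (G) in
def pairOverlap (U : Finset V) (u v : V) : ℕ :=
  (if G.Adj u v then 2 else 0) + ((G.neighborFinset u ∩ G.neighborFinset v) \ U).card

omit [DecidableEq V] in
theorem sum_degree_eq_sum_card_filter_adj (U : Finset V) :
    ∑ u ∈ U, G.degree u = ∑ x, (U.filter (G.Adj x)).card := by
  have := Finset.sum_card_bipartiteAbove_eq_sum_card_bipartiteBelow (s := U)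
    (t := Finset.univ) (r := G.Adj)
  simp only [Finset.bipartiteAbove, Finset.bipartiteBelow, ← neighborFinset_eq_filter,
    card_neighborFinset_eq_degree] at this
  simpa only [adj_comm] using this

omit [Fintype V] in
theorem sum_card_filter_adj_eq_sum_offDiag (U : Finset V) :
    ∑ x ∈ U, (U.filter (G.Adj x)).card =
      ∑ p ∈ U.offDiag, if G.Adj p.1 p.2 then 1 else 0 := by
  rw [Finset.sum_offDiag_eq_sum_sum_erase]
  refine Finset.sum_congr rfl fun x _ => ?_
  rw [← Finset.card_filter, Finset.filter_erase, Finset.erase_eq_of_notMem (by simp)]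

theorem sum_compl_card_offDiag_filter_adj (U : Finset V) :
    ∑ x ∈ Uᶜ, ((U.filter (G.Adj x)).offDiag).card =
      ∑ p ∈ U.offDiag, ((G.neighborFinset p.1 ∩ G.neighborFinset p.2) \ U).card := by
  have := Finset.sum_card_bipartiteAbove_eq_sum_card_bipartiteBelow (s := Uᶜ)
    (t := U.offDiag) (r := fun x p => G.Adj x p.1 ∧ G.Adj x p.2)
  convert this using 3 with x _ p _
  · ext p
    simp only [Finset.bipartiteAbove, Finset.mem_offDiag, Finset.mem_filter, ne_eq]
    tauto
  · ext x
    simp only [Finset.bipartiteBelow, Finset.mem_sdiff, Finset.mem_inter, mem_neighborFinset,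
      adj_comm, Finset.mem_filter, Finset.mem_compl]
    tauto

theorem card_closedNeighborFinset_eq (U : Finset V) :
    (G.closedNeighborFinset U).card =
      U.card + (Uᶜ.filter fun x => (U.filter (G.Adj x)).Nonempty).card := by
  rw [← Finset.card_union_of_disjoint (Finset.disjoint_left.2 fun x hx hx' => by simp_all)]
  congr 1
  ext x
  simp only [mem_closedNeighborFinset, Finset.mem_union, Finset.mem_filter, Finset.mem_compl,
    Finset.Nonempty]
  constructor
  · rintro ⟨u, hu, rfl | hux⟩
    · exact Or.inl hu
    · by_cases hx : x ∈ U
      · exact Or.inl hx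
      · exact Or.inr ⟨hx, u, by simp [hu, hux.symm]⟩
  · rintro (hx | ⟨-, u, hu⟩)
    · exact ⟨x, hx, Or.inl rfl⟩
    · exact ⟨u, hu.1, Or.inr hu.2.symm⟩

theorem two_mul_sum_degree_add_one_le (U : Finset V) :
    2 * ∑ u ∈ U, (G.degree u + 1) ≤
      2 * (G.closedNeighborFinset U).card + ∑ p ∈ U.offDiag, G.pairOverlap U p.1 p.2 := by
  -- a vertex outside `U` with `m ≥ 1` neighbours in `U` is overcounted `m - 1 ≤ m(m - 1)/2` times
  have hout : ∀ x ∈ Uᶜ, 2 * (U.filter (G.Adj x)).card ≤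
      2 * (if (U.filter (G.Adj x)).Nonempty then 1 else 0) +
        ((U.filter (G.Adj x)).offDiag).card := by
    intro x _
    rw [Finset.offDiag_card]
    rcases (U.filter (G.Adj x)).eq_empty_or_nonempty with h | h
    · simp [h]
    · rw [if_pos h]
      have := Nat.sub_add_cancel (Nat.le_mul_self (U.filter (G.Adj x)).card)
      rcases Nat.lt_or_ge (U.filter (G.Adj x)).card 2 with hm | hm
      · omega
      · nlinarith
  have hsplit := Finset.sum_compl_add_sum U fun x => (U.filter (G.Adj x)).card
  rw [← sum_degree_eq_sum_card_filter_adj, sum_card_filter_adj_eq_sum_offDiag] at hsplit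
  have hsum := Finset.sum_le_sum hout
  rw [← Finset.mul_sum, Finset.sum_add_distrib, ← Finset.mul_sum, ← Finset.card_filter,
    sum_compl_card_offDiag_filter_adj] at hsum
  have hadj : ∀ p : V × V,
      (if G.Adj p.1 p.2 then 2 else 0) = 2 * if G.Adj p.1 p.2 then 1 else 0 :=
    fun p => by split_ifs <;> rfl
  simp only [pairOverlap, Finset.sum_add_distrib, hadj, ← Finset.mul_sum,
    card_closedNeighborFinset_eq, Finset.sum_const, smul_eq_mul, mul_one]
  omega

variable {U : Finset V} {u v w m m' : V}

theorem pairOverlap_comm (U : Finset V) (u v : V) : G.pairOverlap U u v = G.pairOverlap U v u := by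
  simp only [pairOverlap, adj_comm, Finset.inter_comm]

theorem mem_commonNeighbors_sdiff {x : V} :
    x ∈ (G.neighborFinset u ∩ G.neighborFinset v) \ U ↔
      (G.Adj u x ∧ G.Adj v x) ∧ x ∉ U := by
  simp

theorem pairOverlap_of_adj (h4 : 4 ≤ G.egirth) (huv : G.Adj u v) : G.pairOverlap U u v = 2 := by
  rw [pairOverlap, if_pos huv, Finset.card_eq_zero.2]
  refine Finset.eq_empty_of_forall_notMem fun x hx => ?_
  obtain ⟨⟨hux, hvx⟩, -⟩ := mem_commonNeighbors_sdiff.1 hx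
  have := h4.trans (egirth_le_three huv hvx hux.symm)
  norm_num at this

theorem pairOverlap_le_one (h5 : 5 ≤ G.egirth) (huv : u ≠ v) (hnadj : ¬G.Adj u v) :
    G.pairOverlap U u v ≤ 1 := by
  rw [pairOverlap, if_neg hnadj, zero_add, Finset.card_le_one]
  intro x hx y hy
  by_contra hxy
  obtain ⟨⟨hux, hvx⟩, -⟩ := mem_commonNeighbors_sdiff.1 hx
  obtain ⟨⟨huy, hvy⟩, -⟩ := mem_commonNeighbors_sdiff.1 hy
  have := h5.trans (egirth_le_four huv hxy hux hvx.symm hvy huy.symm)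
  norm_num at this

theorem pairOverlap_le_two (h5 : 5 ≤ G.egirth) (huv : u ≠ v) : G.pairOverlap U u v ≤ 2 := by
  by_cases hadj : G.Adj u v
  · exact (pairOverlap_of_adj (le_trans (by norm_num) h5) hadj).le
  · exact (pairOverlap_le_one h5 huv hadj).trans (by norm_num)

theorem pairOverlap_eq_zero_of_adj_of_adj (h5 : 5 ≤ G.egirth) (huv : u ≠ v) (hm : m ∈ U)
    (hum : G.Adj u m) (hmv : G.Adj m v) : G.pairOverlap U u v = 0 := by
  have hnadj : ¬G.Adj u v := fun huv' => by
    have := h5.trans (egirth_le_three hum hmv huv'.symm)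
    norm_num at this
  rw [pairOverlap, if_neg hnadj, zero_add, Finset.card_eq_zero]
  refine Finset.eq_empty_of_forall_notMem fun x hx => ?_
  obtain ⟨⟨hux, hvx⟩, hxU⟩ := mem_commonNeighbors_sdiff.1 hx
  have := h5.trans (egirth_le_four huv (ne_of_mem_of_not_mem hm hxU) hum hmv hvx hux.symm)
  norm_num at this

theorem pairOverlap_add_pairOverlap_le_one (h6 : 6 ≤ G.egirth) (huv : G.Adj u v) (hwu : w ≠ u)
    (hwv : w ≠ v) (hnu : ¬G.Adj u w) (hnv : ¬G.Adj v w) :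
    G.pairOverlap U u w + G.pairOverlap U v w ≤ 1 := by
  have h5 : 5 ≤ G.egirth := le_trans (by norm_num) h6
  have hu := pairOverlap_le_one (U := U) h5 hwu.symm hnu
  have hv := pairOverlap_le_one (U := U) h5 hwv.symm hnv
  by_contra hsum
  simp only [pairOverlap, if_neg hnu, if_neg hnv, zero_add] at hu hv hsum
  obtain ⟨x, hx⟩ : ((G.neighborFinset u ∩ G.neighborFinset w) \ U).Nonempty :=
    Finset.card_pos.1 (by omega)
  obtain ⟨y, hy⟩ : ((G.neighborFinset v ∩ G.neighborFinset w) \ U).Nonempty :=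
    Finset.card_pos.1 (by omega)
  obtain ⟨⟨hux, hwx⟩, -⟩ := mem_commonNeighbors_sdiff.1 hx
  obtain ⟨⟨hvy, hwy⟩, -⟩ := mem_commonNeighbors_sdiff.1 hy
  have hxy : x ≠ y := by
    rintro rfl
    have := h5.trans (egirth_le_three huv hvy hux.symm)
    norm_num at this
  have huy : u ≠ y := by rintro rfl; exact hnu hwy.symm
  have hxv : x ≠ v := by rintro rfl; exact hnv hwx.symm
  have := h6.trans (egirth_le_five hwu.symm huy hxy hxv hwv hux hwx.symm hwy hvy.symm huv.symm)
  norm_num at this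

theorem pairOverlap_eq_zero_of_adj_of_adj_of_adj (h6 : 6 ≤ G.egirth) (hum' : u ≠ m')
    (huv : u ≠ v) (hmv : m ≠ v) (hm : m ∈ U) (hm' : m' ∈ U) (hum : G.Adj u m) (hmm' : G.Adj m m')
    (hm'v : G.Adj m' v) : G.pairOverlap U u v = 0 := by
  have hnadj : ¬G.Adj u v := fun huv' => by
    have := h6.trans (egirth_le_four hum' hmv hum hmm' hm'v huv'.symm)
    norm_num at this
  rw [pairOverlap, if_neg hnadj, zero_add, Finset.card_eq_zero]
  refine Finset.eq_empty_of_forall_notMem fun x hx => ?_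
  obtain ⟨⟨hux, hvx⟩, hxU⟩ := mem_commonNeighbors_sdiff.1 hx
  have := h6.trans (egirth_le_five hum' huv hmv (ne_of_mem_of_not_mem hm hxU)
    (ne_of_mem_of_not_mem hm' hxU) hum hmm' hm'v hvx hux.symm)
  norm_num at this

theorem sum_offDiag_pairOverlap_le_of_card_eq_three (h5 : 5 ≤ G.egirth) (hU : U.card = 3) :
    ∑ p ∈ U.offDiag, G.pairOverlap U p.1 p.2 ≤ 2 * 4 := by
  obtain ⟨a, b, c, hab, hac, hbc, rfl⟩ := Finset.card_eq_three.1 hU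
  rw [Finset.sum_offDiag_three_of_comm (pairOverlap_comm _) hab hac hbc, smul_eq_mul]
  have hab₂ := pairOverlap_le_two (U := {a, b, c}) h5 hab
  have hac₂ := pairOverlap_le_two (U := {a, b, c}) h5 hac
  have hbc₂ := pairOverlap_le_two (U := {a, b, c}) h5 hbc
  by_cases hab' : G.Adj a b
  · by_cases hac' : G.Adj a c
    · have := pairOverlap_eq_zero_of_adj_of_adj (U := {a, b, c}) (m := a) h5 hbc (by simp)
        hab'.symm hac'
      omega
    by_cases hbc' : G.Adj b c
    · have := pairOverlap_eq_zero_of_adj_of_adj (U := {a, b, c}) (m := b) h5 hac (by simp)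
        hab' hbc'
      omega
    have := pairOverlap_le_one (U := {a, b, c}) h5 hac hac'
    have := pairOverlap_le_one (U := {a, b, c}) h5 hbc hbc'
    omega
  have := pairOverlap_le_one (U := {a, b, c}) h5 hab hab'
  by_cases hac' : G.Adj a c
  · by_cases hbc' : G.Adj b c
    · have := pairOverlap_eq_zero_of_adj_of_adj (U := {a, b, c}) (m := c) h5 hab (by simp)
        hac' hbc'.symm
      omega
    have := pairOverlap_le_one (U := {a, b, c}) h5 hbc hbc'
    omega
  have := pairOverlap_le_one (U := {a, b, c}) h5 hac hac'
  omega

theorem pairOverlap_triple_sum_le_three (h6 : 6 ≤ G.egirth)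
    (hU : ∀ m ∈ U, ∀ u ∈ U, ∀ v ∈ U, u ≠ v → G.Adj u m → ¬G.Adj m v)
    (ha : a ∈ U) (hb : b ∈ U) (hc : c ∈ U) (hab : a ≠ b) (hac : a ≠ c) (hbc : b ≠ c) :
    G.pairOverlap U a b + G.pairOverlap U a c + G.pairOverlap U b c ≤ 3 := by
  have h5 : 5 ≤ G.egirth := le_trans (by norm_num) h6
  have h4 : 4 ≤ G.egirth := le_trans (by norm_num) h5
  by_cases hab' : G.Adj a b
  · have := pairOverlap_add_pairOverlap_le_one (U := U) h6 hab' hac.symm hbc.symm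
      (hU a ha b hb c hc hbc hab'.symm) (hU b hb a ha c hc hac hab')
    have := pairOverlap_of_adj (U := U) h4 hab'
    omega
  by_cases hac' : G.Adj a c
  · have := pairOverlap_add_pairOverlap_le_one (U := U) h6 hac' hab.symm hbc hab'
      (hU c hc a ha b hb hab hac')
    rw [pairOverlap_comm U c b] at this
    have := pairOverlap_of_adj (U := U) h4 hac'
    omega
  by_cases hbc' : G.Adj b c
  · have := pairOverlap_add_pairOverlap_le_one (U := U) h6 hbc' hab hac
      (fun h => hab' h.symm) (fun h => hac' h.symm)
    rw [pairOverlap_comm U b a, pairOverlap_comm U c a] at this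
    have := pairOverlap_of_adj (U := U) h4 hbc'
    omega
  have := pairOverlap_le_one (U := U) h5 hab hab'
  have := pairOverlap_le_one (U := U) h5 hac hac'
  have := pairOverlap_le_one (U := U) h5 hbc hbc'
  omega

theorem sum_pairOverlap_le_six_of_adj_of_adj (h6 : 6 ≤ G.egirth) (ha : a ∈ U) (hb : b ∈ U)
    (hc : c ∈ U) (hac : a ≠ c) (had : a ≠ d) (hbd : b ≠ d) (hcd : c ≠ d) (hab : G.Adj a b)
    (hbc : G.Adj b c) :
    G.pairOverlap U a b + G.pairOverlap U a c + G.pairOverlap U a d + G.pairOverlap U b c +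
      G.pairOverlap U b d + G.pairOverlap U c d ≤ 6 := by
  have h5 : 5 ≤ G.egirth := le_trans (by norm_num) h6
  have h4 : 4 ≤ G.egirth := le_trans (by norm_num) h5
  rw [pairOverlap_of_adj h4 hab, pairOverlap_of_adj h4 hbc,
    pairOverlap_eq_zero_of_adj_of_adj h5 hac hb hab hbc]
  by_cases hbd' : G.Adj b d
  · rw [pairOverlap_of_adj h4 hbd', pairOverlap_eq_zero_of_adj_of_adj h5 had hb hab hbd',
      pairOverlap_eq_zero_of_adj_of_adj h5 hcd hb hbc.symm hbd']
  by_cases had' : G.Adj a d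
  · rw [pairOverlap_of_adj h4 had', pairOverlap_eq_zero_of_adj_of_adj h5 hbd ha hab.symm had',
      pairOverlap_eq_zero_of_adj_of_adj_of_adj h6 hac.symm hcd hbd hb ha hbc.symm hab.symm had']
  by_cases hcd' : G.Adj c d
  · rw [pairOverlap_of_adj h4 hcd', pairOverlap_eq_zero_of_adj_of_adj h5 hbd hc hbc hcd',
      pairOverlap_eq_zero_of_adj_of_adj_of_adj h6 hac had hbd hb hc hab hbc hcd']
  have := pairOverlap_add_pairOverlap_le_one (U := U) h6 hab had.symm hbd.symm had' hbd'
  have := pairOverlap_le_one (U := U) h5 hcd hcd'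
  omega

theorem sum_offDiag_pairOverlap_le_of_card_eq_four (h6 : 6 ≤ G.egirth) (hU : U.card = 4) :
    ∑ p ∈ U.offDiag, G.pairOverlap U p.1 p.2 ≤ 2 * 6 := by
  by_cases hpath : ∃ b ∈ U, ∃ a ∈ U, ∃ c ∈ U, a ≠ c ∧ G.Adj a b ∧ G.Adj b c
  · obtain ⟨b, hb, a, ha, c, hc, hac, hab, hbc⟩ := hpath
    have habc : ({a, b, c} : Finset V).card = 3 :=
      Finset.card_eq_three.2 ⟨a, b, c, hab.ne, hac, hbc.ne, rfl⟩
    obtain ⟨d, hd, hdabc⟩ := Finset.exists_mem_notMem_of_card_lt_card (s := {a, b, c}) (t := U)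
      (by omega)
    simp only [Finset.mem_insert, Finset.mem_singleton, not_or] at hdabc
    obtain ⟨hda, hdb, hdc⟩ := hdabc
    obtain rfl : {a, b, c, d} = U := Finset.eq_of_subset_of_card_le
      (by simp [Finset.insert_subset_iff, ha, hb, hc, hd])
      (by rw [hU, Finset.card_eq_four.2 ⟨a, b, c, d, hab.ne, hac, Ne.symm hda, hbc.ne,
        Ne.symm hdb, Ne.symm hdc, rfl⟩])
    rw [Finset.sum_offDiag_four_of_comm (pairOverlap_comm _) hab.ne hac (Ne.symm hda) hbc.ne
      (Ne.symm hdb) (Ne.symm hdc), smul_eq_mul]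
    have := sum_pairOverlap_le_six_of_adj_of_adj (U := {a, b, c, d}) h6 (by simp) (by simp)
      (by simp) hac (Ne.symm hda) (Ne.symm hdb) (Ne.symm hdc) hab hbc
    omega
  · push Not at hpath
    -- every pair of `U` lies in exactly two of its four triples
    obtain ⟨a, b, c, d, hab, hac, had, hbc, hbd, hcd, rfl⟩ := Finset.card_eq_four.1 hU
    have := pairOverlap_triple_sum_le_three h6 hpath (by simp) (by simp) (by simp) hab hac hbc
    have := pairOverlap_triple_sum_le_three h6 hpath (by simp) (by simp) (by simp) hab had hbd
    have := pairOverlap_triple_sum_le_three h6 hpath (by simp) (by simp) (by simp) hac had hcd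
    have := pairOverlap_triple_sum_le_three h6 hpath (by simp) (by simp) (by simp) hbc hbd hcd
    rw [Finset.sum_offDiag_four_of_comm (pairOverlap_comm _) hab hac had hbc hbd hcd, smul_eq_mul]
    omega

theorem IsZeroForcingSet.mul_le_card_add {Z : Finset V} (hZ : G.IsZeroForcingSet Z) {k δ B : ℕ}
    (hk : k ≤ Fintype.card V) (hdeg : ∀ v, δ ≤ G.degree v)
    (hB : ∀ U : Finset V, U.card = k → ∑ p ∈ U.offDiag, G.pairOverlap U p.1 p.2 ≤ 2 * B) :
    k * δ ≤ Z.card + B := by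
  obtain ⟨U, hU, hUZ⟩ := hZ.exists_card_closedNeighborFinset_sdiff_le hk
  have hloss := G.two_mul_sum_degree_add_one_le U
  have hsum : k * (δ + 1) ≤ ∑ u ∈ U, (G.degree u + 1) := by
    rw [← hU, ← smul_eq_mul, ← Finset.sum_const]
    exact Finset.sum_le_sum fun u _ => Nat.add_le_add_right (hdeg u) 1
  have hN : (G.closedNeighborFinset U).card ≤ (G.closedNeighborFinset U \ Z).card + Z.card :=
    Finset.card_le_card_sdiff_add_card
  have := hB U hU
  rw [Nat.mul_succ] at hsum
  omega

end SimpleGraph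

theorem stmt12 {V : Type*} [Fintype V] (G : SimpleGraph V) [DecidableRel G.Adj] (g δ : ℕ)
    (hg : G.egirth = (g : ℕ∞)) (hgm : g = 5 ∨ g = 6) (hδ : G.minDegree = δ) (h2 : 2 ≤ δ) :
    (g - 2) * (δ - 2) + 2 ≤ G.zeroForcingNumber := by
  classical
  have hdeg : ∀ v, δ ≤ G.degree v := fun v => hδ ▸ G.minDegree_le_degree v
  have hcard : g ≤ Fintype.card V := by
    have hcyc : ¬G.IsAcyclic := by
      rw [← SimpleGraph.egirth_eq_top, hg]; exact ENat.natCast_ne_top g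
    exact_mod_cast hg ▸ G.egirth_le_card hcyc
  refine le_csInf ⟨_, Finset.univ, rfl, fun v => .base (by simp)⟩ ?_
  rintro _ ⟨Z, rfl, hZ⟩
  rcases hgm with rfl | rfl
  · have := hZ.mul_le_card_add (k := 3) (B := 4) (by omega) hdeg fun U hU =>
      SimpleGraph.sum_offDiag_pairOverlap_le_of_card_eq_three (by rw [hg]; norm_num) hU
    omega
  · have := hZ.mul_le_card_add (k := 4) (B := 6) (by omega) hdeg fun U hU =>
      SimpleGraph.sum_offDiag_pairOverlap_le_of_card_eq_four (by rw [hg]; norm_num) hU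
    omega
end

section
/- The zero forcing number of the complete bipartite graph K_{a,b} with 2 ≤ a ≤ b equals a + b − 2. -/
namespace SimpleGraph

variable {V : Type*}

open Sum

lemma ZeroForces.ne_of_neighborSet_eq {G : SimpleGraph V} {Z : Set V} {x y v : V}
    (hxy : x ≠ y) (hx : x ∉ Z) (hy : y ∉ Z) (hN : G.neighborSet x = G.neighborSet y)
    (hv : G.ZeroForces Z v) : v ≠ x ∧ v ≠ y := by
  have hadj : ∀ w, G.Adj w x ↔ G.Adj w y := fun w => by
    rw [G.adj_comm w x, G.adj_comm w y, ← mem_neighborSet, ← mem_neighborSet, hN]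
  induction hv with
  | base h => exact ⟨fun h' => hx (h' ▸ h), fun h' => hy (h' ▸ h)⟩
  | @force w u _ hwu _ _ ih =>
    constructor
    · rintro rfl
      exact (ih y ((hadj w).1 hwu) hxy.symm).2 rfl
    · rintro rfl
      exact (ih x ((hadj w).2 hwu) hxy).1 rfl

lemma IsZeroForcingSet.mem_or_mem_of_neighborSet_eq {G : SimpleGraph V} {Z : Set V}
    (hZ : G.IsZeroForcingSet Z) {x y : V} (hxy : x ≠ y)
    (hN : G.neighborSet x = G.neighborSet y) : x ∈ Z ∨ y ∈ Z := by
  by_contra! h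
  exact (ZeroForces.ne_of_neighborSet_eq hxy h.1 h.2 hN (hZ x)).1 rfl

lemma ZeroForces.force_of_forall_mem {G : SimpleGraph V} {Z : Set V} {v u : V}
    (hv : G.ZeroForces Z v) (hvu : G.Adj v u) (hZ : ∀ w, G.Adj v w → w ≠ u → w ∈ Z) :
    G.ZeroForces Z u :=
  hv.force hvu fun w hvw hwu => .base (hZ w hvw hwu)

variable {α β : Type*}

lemma completeBipartiteGraph_neighborSet_eq {u v : α ⊕ β} (h : u.isLeft = v.isLeft) :
    (completeBipartiteGraph α β).neighborSet u = (completeBipartiteGraph α β).neighborSet v := by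
  ext w
  cases u <;> cases v <;> simp_all

lemma completeBipartiteGraph_isZeroForcingSet_compl_pair
    [Nontrivial α] [Nontrivial β] (x : α) (y : β) :
    (completeBipartiteGraph α β).IsZeroForcingSet ({inl x, inr y}ᶜ : Set (α ⊕ β)) := by
  obtain ⟨x', hx'⟩ := exists_ne x
  obtain ⟨y', hy'⟩ := exists_ne y
  have hbase : ∀ v, v ≠ inl x → v ≠ inr y →
      (completeBipartiteGraph α β).ZeroForces {inl x, inr y}ᶜ v := fun v h₁ h₂ =>
    .base (by simp [h₁, h₂])
  rintro (x'' | y'')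
  · by_cases h : x'' = x
    · subst h
      refine (hbase (inr y') (by simp) (by simpa using hy')).force_of_forall_mem (by simp) ?_
      rintro (_ | _) hadj hne <;> simp_all
    · exact hbase _ (by simpa using h) (by simp)
  · by_cases h : y'' = y
    · subst h
      refine (hbase (inl x') (by simpa using hx') (by simp)).force_of_forall_mem (by simp) ?_
      rintro (_ | _) hadj hne <;> simp_all
    · exact hbase _ (by simp) (by simpa using h)

lemma IsZeroForcingSet.card_sum_sub_two_le_card [Fintype α] [Fintype β] {Z : Finset (α ⊕ β)}
    (hZ : (completeBipartiteGraph α β).IsZeroForcingSet ↑Z) :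
    Fintype.card α + Fintype.card β - 2 ≤ Z.card := by
  classical
  have hinj : Set.InjOn Sum.isLeft (↑Zᶜ : Set (α ⊕ β)) := by
    intro u hu v hv huv
    by_contra hne
    rw [Finset.coe_compl, Set.mem_compl_iff, Finset.mem_coe] at hu hv
    exact (hZ.mem_or_mem_of_neighborSet_eq hne (completeBipartiteGraph_neighborSet_eq huv)).elim
      hu hv
  have hcompl : Zᶜ.card ≤ 2 := by
    simpa using Finset.card_le_card_of_injOn Sum.isLeft (t := Finset.univ)
      (fun _ _ => Finset.mem_univ _) hinj
  have := Finset.card_add_card_compl Z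
  rw [Fintype.card_sum] at this
  omega

theorem zeroForcingNumber_completeBipartiteGraph [Fintype α] [Fintype β]
    [Nontrivial α] [Nontrivial β] :
    (completeBipartiteGraph α β).zeroForcingNumber = Fintype.card α + Fintype.card β - 2 := by
  classical
  obtain ⟨x⟩ := ‹Nontrivial α›.to_nonempty
  obtain ⟨y⟩ := ‹Nontrivial β›.to_nonempty
  have hpair : ({inl x, inr y}ᶜ : Finset (α ⊕ β)).card = Fintype.card α + Fintype.card β - 2 := by
    rw [Finset.card_compl, Finset.card_pair (by simp), Fintype.card_sum]
  have hmem : Fintype.card α + Fintype.card β - 2 ∈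
      {k | ∃ Z : Finset (α ⊕ β), Z.card = k ∧ (completeBipartiteGraph α β).IsZeroForcingSet ↑Z} := by
    refine ⟨_, hpair, ?_⟩
    rw [Finset.coe_compl, Finset.coe_pair]
    exact completeBipartiteGraph_isZeroForcingSet_compl_pair x y
  refine le_antisymm (Nat.sInf_le hmem) (le_csInf ⟨_, hmem⟩ ?_)
  rintro _ ⟨Z, rfl, hZ⟩
  exact hZ.card_sum_sub_two_le_card

end SimpleGraph

theorem stmt14 (a b : ℕ) (ha : 2 ≤ a) (hab : a ≤ b) :
    (completeBipartiteGraph (Fin a) (Fin b)).zeroForcingNumber = a + b - 2 := by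
  have : Nontrivial (Fin a) := Fin.nontrivial_iff_two_le.2 ha
  have : Nontrivial (Fin b) := Fin.nontrivial_iff_two_le.2 (ha.trans hab)
  simpa using SimpleGraph.zeroForcingNumber_completeBipartiteGraph (α := Fin a) (β := Fin b)
end
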